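/- arXiv:2310.11518 — 8 statements merged into one kernel-verified Lean document; each statement's English description precedes it below -/
import Mathlib

section
/- In a polymatrix game, for any player i and any fixed mixed strategy s_i of player i, the minimum of i's global utility over all opponent mixed-strategy profiles decomposes as a sum of subgame minima: min_{s_{-i} ∈ S_{-i}} u_i(s_i, s_{-i}) = Σ_{{i,j} ∈ E_i} min_{s_j ∈ S_j} u_{ij}(s_i, s_j), where S_j is the set of mixed strategies of player j and S_{-i} is the set of profiles in which all players other than i mix independently. -/
open Finset

section GameTheory

variable {N : Type*} [Fintype N] [DecidableEq N]
variable {P : N → Type*} [∀ j, Fintype (P j)] [∀ j, DecidableEq (P j)] [∀ j, Nonempty (P j)]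

/-- A probability distribution on a finite type. -/
def IsDist {A : Type*} [Fintype A] (μ : A → ℝ) : Prop :=
  (∀ a, 0 ≤ μ a) ∧ ∑ a, μ a = 1

/-- A profile of mixed strategies: one probability distribution per player. -/
def IsMixedProfile (s : ∀ j, P j → ℝ) : Prop := ∀ j, IsDist (s j)

/-- The mixed strategy that plays the pure strategy `a` with probability 1. -/
def pureMix {A : Type*} [DecidableEq A] (a : A) : A → ℝ := fun b => if b = a then 1 else 0

/-- Expected utility of player `i` under the mixed-strategy profile `s`:
`u_i(s) = Σ_ρ (Π_j s_j(ρ_j)) u_i(ρ)`. -/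
def mixedUtil (u : N → (∀ j, P j) → ℝ) (s : ∀ j, P j → ℝ) (i : N) : ℝ :=
  ∑ ρ : ∀ j, P j, (∏ j, s j (ρ j)) * u i ρ

/-- `s` is an ε-Nash equilibrium: no player gains more than ε by deviating to a
pure strategy. -/
def IsEpsNash (u : N → (∀ j, P j) → ℝ) (s : ∀ j, P j → ℝ) (ε : ℝ) : Prop :=
  ∀ i, ∀ ρi' : P i,
    mixedUtil u (Function.update s i (pureMix ρi')) i - mixedUtil u s i ≤ ε

/-- `μ` is an ε-coarse correlated equilibrium. -/
def IsEpsCCE (u : N → (∀ j, P j) → ℝ) (μ : (∀ j, P j) → ℝ) (ε : ℝ) : Prop :=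
  ∀ i, ∀ ρi' : P i,
    ∑ ρ : ∀ j, P j, μ ρ * (u i (Function.update ρ i ρi') - u i ρ) ≤ ε

/-- The marginal strategy of player `i` under the joint distribution `μ`. -/
def marginal (μ : (∀ j, P j) → ℝ) (i : N) (pi : P i) : ℝ :=
  ∑ ρ : ∀ j, P j, if ρ i = pi then μ ρ else 0

/-- Neighbors of `i` in the polymatrix graph, i.e. the edges `E_i` containing `i`. -/
def neighbors (Adj : N → N → Bool) (i : N) : Finset N :=
  Finset.univ.filter (fun j => Adj i j)

/-- Global utility of player `i` in the polymatrix game given by graph `Adj`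
and edgewise utilities `U`. -/
def polyUtil (Adj : N → N → Bool) (U : ∀ i j : N, P i → P j → ℝ) (i : N)
    (ρ : ∀ j, P j) : ℝ :=
  ∑ j ∈ neighbors Adj i, U i j (ρ i) (ρ j)

/-- Expected utility of `i` in the two-player subgame with `j`, under mixed
strategies `si`, `sj`. -/
def subUtil (U : ∀ i j : N, P i → P j → ℝ) (i j : N) (si : P i → ℝ) (sj : P j → ℝ) : ℝ :=
  ∑ pi : P i, ∑ pj : P j, si pi * sj pj * U i j pi pj

/-- `Adj` is a valid edge indicator: symmetric and irreflexive. -/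
def IsAdj (Adj : N → N → Bool) : Prop :=
  (∀ i j, Adj i j = Adj j i) ∧ (∀ i, Adj i i = false)

/-- `u` is the global utility function of the polymatrix game `(Adj, U)`. -/
def IsPolymatrix (u : N → (∀ j, P j) → ℝ) (Adj : N → N → Bool)
    (U : ∀ i j : N, P i → P j → ℝ) : Prop :=
  IsAdj Adj ∧ ∀ i ρ, u i ρ = polyUtil Adj U i ρ

/-- The polymatrix game `(Adj, U)` is constant-sum on every edge. -/
def IsConstantSumPoly (Adj : N → N → Bool) (U : ∀ i j : N, P i → P j → ℝ) : Prop :=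
  ∀ i j, Adj i j → ∃ c : ℝ, ∀ (pi : P i) (pj : P j), U i j pi pj + U j i pj pi = c

/-- `(si, sj)` is a γ-Nash equilibrium of the two-player subgame between `i` and `j`. -/
def SubgameEpsNash (U : ∀ i j : N, P i → P j → ℝ) (i j : N) (si : P i → ℝ)
    (sj : P j → ℝ) (γ : ℝ) : Prop :=
  (∀ pi' : P i, subUtil U i j (pureMix pi') sj - subUtil U i j si sj ≤ γ) ∧
  (∀ pj' : P j, subUtil U j i (pureMix pj') si - subUtil U j i sj si ≤ γ)

end GameTheory


lemma sum_pi_prod {ι : Type*} [Fintype ι] [DecidableEq ι] {Q : ι → Type*}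
    [∀ k, Fintype (Q k)] (g : ∀ k, Q k → ℝ) :
    ∑ ρ : ∀ k, Q k, ∏ k, g k (ρ k) = ∏ k, ∑ p, g k p := by
  rw [Finset.prod_univ_sum, Fintype.piFinset_univ]

lemma prodh_aux {ι : Type*} [Fintype ι] [DecidableEq ι] {Q : ι → Type*}
    [∀ k, Fintype (Q k)] [∀ k, DecidableEq (Q k)]
    (s : ∀ k, Q k → ℝ) {i j : ι} (hij : i ≠ j) (pi : Q i) (pj : Q j)
    (ρ : ∀ k, Q k) :
    (∏ k, (Function.update (Function.update s i
        (fun p => s i p * (if p = pi then (1:ℝ) else 0))) j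
        (fun p => s j p * (if p = pj then (1:ℝ) else 0))) k (ρ k))
      = (∏ k, s k (ρ k)) *
        ((if ρ i = pi then 1 else 0) * (if ρ j = pj then 1 else 0)) := by
  set h := Function.update (Function.update s i
        (fun p => s i p * (if p = pi then (1:ℝ) else 0))) j
        (fun p => s j p * (if p = pj then (1:ℝ) else 0)) with hh
  have hi_mem : i ∈ (Finset.univ.erase j) := Finset.mem_erase.mpr ⟨hij, Finset.mem_univ i⟩
  rw [← Finset.mul_prod_erase Finset.univ (fun k => h k (ρ k)) (Finset.mem_univ j),
      ← Finset.mul_prod_erase _ (fun k => h k (ρ k)) hi_mem,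
      ← Finset.mul_prod_erase Finset.univ (fun k => s k (ρ k)) (Finset.mem_univ j),
      ← Finset.mul_prod_erase _ (fun k => s k (ρ k)) hi_mem]
  have h1 : h j (ρ j) = s j (ρ j) * (if ρ j = pj then 1 else 0) := by
    rw [hh, Function.update_self]
  have h2 : h i (ρ i) = s i (ρ i) * (if ρ i = pi then 1 else 0) := by
    rw [hh, Function.update_of_ne hij, Function.update_self]
  have h3 : ∀ k ∈ (Finset.univ.erase j).erase i, h k (ρ k) = s k (ρ k) := by
    intro k hk
    obtain ⟨hki, hk2⟩ := Finset.mem_erase.mp hk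
    obtain ⟨hkj, _⟩ := Finset.mem_erase.mp hk2
    rw [hh, Function.update_of_ne hkj, Function.update_of_ne hki]
  rw [h1, h2, Finset.prod_congr rfl h3]
  ring

lemma key_aux {ι : Type*} [Fintype ι] [DecidableEq ι] {Q : ι → Type*}
    [∀ k, Fintype (Q k)] [∀ k, DecidableEq (Q k)]
    (s : ∀ k, Q k → ℝ) (hs : ∀ k, ∑ p, s k p = 1) {i j : ι} (hij : i ≠ j)
    (pi : Q i) (pj : Q j) :
    ∑ ρ : ∀ k, Q k, (∏ k, s k (ρ k)) *
        ((if ρ i = pi then (1:ℝ) else 0) * (if ρ j = pj then 1 else 0))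
      = s i pi * s j pj := by
  set h := Function.update (Function.update s i
        (fun p => s i p * (if p = pi then (1:ℝ) else 0))) j
        (fun p => s j p * (if p = pj then (1:ℝ) else 0)) with hh
  have hi_mem : i ∈ (Finset.univ.erase j) := Finset.mem_erase.mpr ⟨hij, Finset.mem_univ i⟩
  calc ∑ ρ : ∀ k, Q k, (∏ k, s k (ρ k)) *
        ((if ρ i = pi then (1:ℝ) else 0) * (if ρ j = pj then 1 else 0))
      = ∑ ρ : ∀ k, Q k, ∏ k, h k (ρ k) :=
        Finset.sum_congr rfl fun ρ _ => (prodh_aux s hij pi pj ρ).symm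
    _ = ∏ k, ∑ p, h k p := sum_pi_prod h
    _ = s i pi * s j pj := by
        rw [← Finset.mul_prod_erase Finset.univ (fun k => ∑ p, h k p) (Finset.mem_univ j),
            ← Finset.mul_prod_erase _ (fun k => ∑ p, h k p) hi_mem]
        have h1 : ∑ p, h j p = s j pj := by
          rw [hh]; simp [Function.update_self, mul_ite, mul_one, mul_zero,
            Finset.sum_ite_eq']
        have h2 : ∑ p, h i p = s i pi := by
          rw [hh, Function.update_of_ne hij, Function.update_self]
          simp [mul_ite, mul_one, mul_zero, Finset.sum_ite_eq']
        have h3 : ∀ k ∈ (Finset.univ.erase j).erase i, (∑ p, h k p) = 1 := by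
          intro k hk
          obtain ⟨hki, hk2⟩ := Finset.mem_erase.mp hk
          obtain ⟨hkj, _⟩ := Finset.mem_erase.mp hk2
          rw [hh, Function.update_of_ne hkj, Function.update_of_ne hki]
          exact hs k
        rw [h1, h2, Finset.prod_eq_one h3, mul_one, mul_comm]

lemma marg2 {ι : Type*} [Fintype ι] [DecidableEq ι] {Q : ι → Type*}
    [∀ k, Fintype (Q k)] [∀ k, DecidableEq (Q k)]
    (s : ∀ k, Q k → ℝ) (hs : ∀ k, ∑ p, s k p = 1) {i j : ι} (hij : i ≠ j)
    (F : Q i → Q j → ℝ) :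
    ∑ ρ : ∀ k, Q k, (∏ k, s k (ρ k)) * F (ρ i) (ρ j)
      = ∑ pi : Q i, ∑ pj : Q j, s i pi * s j pj * F pi pj := by
  calc ∑ ρ : ∀ k, Q k, (∏ k, s k (ρ k)) * F (ρ i) (ρ j)
      = ∑ ρ : ∀ k, Q k, ∑ pi : Q i, ∑ pj : Q j, (∏ k, s k (ρ k)) *
          ((if ρ i = pi then (1:ℝ) else 0) * (if ρ j = pj then 1 else 0)) * F pi pj := by
        refine Finset.sum_congr rfl fun ρ _ => ?_
        simp [mul_ite, mul_one, mul_zero, ite_mul, zero_mul, Finset.sum_ite_eq]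
    _ = ∑ pi : Q i, ∑ pj : Q j, (∑ ρ : ∀ k, Q k, (∏ k, s k (ρ k)) *
          ((if ρ i = pi then (1:ℝ) else 0) * (if ρ j = pj then 1 else 0))) * F pi pj := by
        rw [Finset.sum_comm]
        refine Finset.sum_congr rfl fun pi _ => ?_
        rw [Finset.sum_comm]
        refine Finset.sum_congr rfl fun pj _ => ?_
        rw [Finset.sum_mul]
    _ = ∑ pi : Q i, ∑ pj : Q j, s i pi * s j pj * F pi pj := by
        refine Finset.sum_congr rfl fun pi _ => Finset.sum_congr rfl fun pj _ => ?_
        rw [key_aux s hs hij]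

lemma pureMix_isDist {A : Type*} [Fintype A] [DecidableEq A] (a : A) :
    IsDist (pureMix a) := by
  constructor
  · intro b; unfold pureMix; split <;> norm_num
  · simp [pureMix]


/-- In a polymatrix game, for any player `i` and fixed mixed strategy `si`,
the minimum of `i`'s global utility over all opponent mixed-strategy profiles decomposes
as the sum over the edges containing `i` of the subgame minima. -/
theorem min_decomposes_over_subgames
    {N : Type*} [Fintype N] [DecidableEq N]
    {P : N → Type*} [∀ j, Fintype (P j)] [∀ j, DecidableEq (P j)] [∀ j, Nonempty (P j)]
    (u : N → (∀ j, P j) → ℝ)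
    (Adj : N → N → Bool) (U : ∀ i j : N, P i → P j → ℝ)
    (hpoly : IsPolymatrix u Adj U)
    (i : N) (si : P i → ℝ) (hsi : IsDist si) :
    sInf {x : ℝ | ∃ t : ∀ j, P j → ℝ, (∀ j, j ≠ i → IsDist (t j)) ∧
        x = mixedUtil u (Function.update t i si) i}
      = ∑ j ∈ neighbors Adj i,
          sInf {x : ℝ | ∃ sj : P j → ℝ, IsDist sj ∧ x = subUtil U i j si sj} := by
  classical
  obtain ⟨⟨hsym, hirr⟩, hu⟩ := hpoly
  set c : ∀ j, P j → ℝ := fun j pj => ∑ pi, si pi * U i j pi pj with hc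
  set m : N → ℝ := fun j => Finset.univ.inf' Finset.univ_nonempty (c j) with hm
  have hne_i : ∀ j ∈ neighbors Adj i, j ≠ i := by
    intro j hj hji
    subst hji
    rw [neighbors, Finset.mem_filter, hirr] at hj
    simpa using hj.2
  -- subgame utility in terms of c
  have hsub_eq : ∀ (j : N) (sj : P j → ℝ),
      subUtil U i j si sj = ∑ pj, sj pj * c j pj := by
    intro j sj
    rw [subUtil, Finset.sum_comm]
    refine Finset.sum_congr rfl fun pj _ => ?_
    rw [hc, Finset.mul_sum]
    exact Finset.sum_congr rfl fun pi _ => by ring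
  have hpure_sub : ∀ (j : N) (pj0 : P j),
      subUtil U i j si (pureMix pj0) = c j pj0 := by
    intro j pj0
    rw [hsub_eq]
    simp [pureMix, ite_mul, one_mul, zero_mul, Finset.sum_ite_eq']
  have hlb_sub : ∀ (j : N) (sj : P j → ℝ), IsDist sj → m j ≤ subUtil U i j si sj := by
    intro j sj hsj
    rw [hsub_eq]
    calc m j = (∑ pj, sj pj) * m j := by rw [hsj.2, one_mul]
    _ = ∑ pj, sj pj * m j := by rw [Finset.sum_mul]
    _ ≤ ∑ pj, sj pj * c j pj := by
        refine Finset.sum_le_sum fun pj _ => ?_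
        exact mul_le_mul_of_nonneg_left
          (Finset.inf'_le _ (Finset.mem_univ pj)) (hsj.1 pj)
  -- argmins
  choose b hb1 hb2 using fun j =>
    Finset.exists_mem_eq_inf' (Finset.univ_nonempty : (Finset.univ : Finset (P j)).Nonempty) (c j)
  have hmb : ∀ j, m j = c j (b j) := fun j => hb2 j
  -- Step 1
  have hstep1 : ∀ j : N,
      sInf {x : ℝ | ∃ sj : P j → ℝ, IsDist sj ∧ x = subUtil U i j si sj} = m j := by
    intro j
    apply le_antisymm
    · apply csInf_le
      · exact ⟨m j, by rintro x ⟨sj, hsj, rfl⟩; exact hlb_sub j sj hsj⟩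
      · exact ⟨pureMix (b j), pureMix_isDist _, by rw [hpure_sub, ← hmb]⟩
    · apply le_csInf
      · exact ⟨_, pureMix (b j), pureMix_isDist _, rfl⟩
      · rintro x ⟨sj, hsj, rfl⟩; exact hlb_sub j sj hsj
  -- global decomposition
  have hglobal : ∀ t : ∀ j, P j → ℝ, (∀ j, j ≠ i → IsDist (t j)) →
      mixedUtil u (Function.update t i si) i
        = ∑ j ∈ neighbors Adj i, subUtil U i j si (t j) := by
    intro t ht
    set s := Function.update t i si with hsdef
    have hs1 : ∀ k, ∑ p, s k p = 1 := by
      intro k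
      by_cases hk : k = i
      · subst hk; rw [hsdef, Function.update_self]; exact hsi.2
      · rw [hsdef, Function.update_of_ne hk]; exact (ht k hk).2
    calc mixedUtil u s i
        = ∑ ρ : ∀ j, P j, ∑ j ∈ neighbors Adj i,
            (∏ k, s k (ρ k)) * U i j (ρ i) (ρ j) := by
          rw [mixedUtil]
          refine Finset.sum_congr rfl fun ρ _ => ?_
          rw [hu i ρ, polyUtil, Finset.mul_sum]
      _ = ∑ j ∈ neighbors Adj i, ∑ ρ : ∀ j, P j,
            (∏ k, s k (ρ k)) * U i j (ρ i) (ρ j) := Finset.sum_comm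
      _ = ∑ j ∈ neighbors Adj i, subUtil U i j si (t j) := by
          refine Finset.sum_congr rfl fun j hj => ?_
          have hij : i ≠ j := fun h => hne_i j hj h.symm
          rw [marg2 s hs1 hij, subUtil]
          refine Finset.sum_congr rfl fun pi _ => Finset.sum_congr rfl fun pj _ => ?_
          rw [hsdef, Function.update_self, Function.update_of_ne (hne_i j hj)]
  -- finish
  have hR : ∑ j ∈ neighbors Adj i,
      sInf {x : ℝ | ∃ sj : P j → ℝ, IsDist sj ∧ x = subUtil U i j si sj}
      = ∑ j ∈ neighbors Adj i, m j :=
    Finset.sum_congr rfl fun j _ => hstep1 j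
  rw [hR]
  apply le_antisymm
  · apply csInf_le
    · refine ⟨∑ j ∈ neighbors Adj i, m j, ?_⟩
      rintro x ⟨t, ht, rfl⟩
      rw [hglobal t ht]
      exact Finset.sum_le_sum fun j hj => hlb_sub j (t j) (ht j (hne_i j hj))
    · refine ⟨fun j => pureMix (b j), fun j _ => pureMix_isDist _, ?_⟩
      rw [hglobal _ (fun j _ => pureMix_isDist _)]
      exact Finset.sum_congr rfl fun j _ => by rw [hpure_sub, ← hmb]
  · apply le_csInf
    · exact ⟨_, fun j => pureMix (b j), fun j _ => pureMix_isDist _, rfl⟩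
    · rintro x ⟨t, ht, rfl⟩
      rw [hglobal t ht]
      exact Finset.sum_le_sum fun j hj => hlb_sub j (t j) (ht j (hne_i j hj))
end

section
/- In a constant-sum polymatrix game, for every coarse correlated equilibrium μ, every player i, and every mixed strategy s_i of player i, the expected utility of deviating to s_i while the other players continue to play according to μ equals i's utility when the other players play their marginal strategies: E_{ρ∼μ}[u_i(s_i, ρ_{-i})] = u_i(s_i, s^μ_{-i}). -/
open Finset

lemma piSplitAt_prod {ι : Type*} [Fintype ι] [DecidableEq ι]
    {Q : ι → Type*} [∀ k, Fintype (Q k)]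
    (s : ∀ k, Q k → ℝ) (i : ι) (qi : Q i) (rest : ∀ k : {k // k ≠ i}, Q k) :
    (∏ k, s k ((Equiv.piSplitAt i Q).symm (qi, rest) k))
      = s i qi * ∏ k : {k // k ≠ i}, s k (rest k) := by
  rw [Fintype.prod_eq_mul_prod_compl i]
  have hval : ((Equiv.piSplitAt i Q).symm (qi, rest)) i = qi := by simp
  rw [hval]
  congr 1
  rw [Finset.prod_subtype (p := fun k => k ≠ i) ({i}ᶜ : Finset ι) (fun x => by simp)
      (fun k : ι => s k ((Equiv.piSplitAt i Q).symm (qi, rest) k))]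
  refine Finset.prod_congr rfl fun k _ => ?_
  have : ((Equiv.piSplitAt i Q).symm (qi, rest)) k = rest k := by
    simp [k.2]
  rw [this]

lemma prod_pi_sum_one {ι : Type*} [Fintype ι] [DecidableEq ι]
    {Q : ι → Type*} [∀ k, Fintype (Q k)]
    (s : ∀ k, Q k → ℝ) (hs : ∀ k, ∑ q, s k q = 1) :
    ∑ ρ : ∀ k, Q k, ∏ k, s k (ρ k) = 1 := by
  rw [← Fintype.prod_sum]
  simp [hs]

lemma expect_single {ι : Type*} [Fintype ι] [DecidableEq ι]
    {Q : ι → Type*} [∀ k, Fintype (Q k)]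
    (s : ∀ k, Q k → ℝ) (hs : ∀ k, ∑ q, s k q = 1) (j : ι) (g : Q j → ℝ) :
    ∑ ρ : ∀ k, Q k, (∏ k, s k (ρ k)) * g (ρ j) = ∑ q, s j q * g q := by
  rw [← Equiv.sum_comp (Equiv.piSplitAt j Q).symm
      (fun ρ => (∏ k, s k (ρ k)) * g (ρ j)), Fintype.sum_prod_type]
  refine Finset.sum_congr rfl fun q _ => ?_
  have hval : ∀ rest : ∀ k : {k // k ≠ j}, Q k,
      ((Equiv.piSplitAt j Q).symm (q, rest)) j = q := by
    intro rest; simp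
  calc ∑ rest : ∀ k : {k // k ≠ j}, Q k,
        (∏ k, s k ((Equiv.piSplitAt j Q).symm (q, rest) k))
          * g ((Equiv.piSplitAt j Q).symm (q, rest) j)
      = ∑ rest : ∀ k : {k // k ≠ j}, Q k,
        (s j q * g q) * ∏ k : {k // k ≠ j}, s k (rest k) := by
        refine Finset.sum_congr rfl fun rest _ => ?_
        rw [piSplitAt_prod, hval]; ring
    _ = s j q * g q := by
        rw [← Finset.mul_sum, prod_pi_sum_one (fun k : {k // k ≠ j} => s k)
          (fun k => hs k)]
        ring

lemma expect_pair {ι : Type*} [Fintype ι] [DecidableEq ι]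
    {Q : ι → Type*} [∀ k, Fintype (Q k)]
    (s : ∀ k, Q k → ℝ) (hs : ∀ k, ∑ q, s k q = 1) (i j : ι) (hij : j ≠ i)
    (f : Q i → Q j → ℝ) :
    ∑ ρ : ∀ k, Q k, (∏ k, s k (ρ k)) * f (ρ i) (ρ j)
      = ∑ qi, ∑ qj, s i qi * s j qj * f qi qj := by
  rw [← Equiv.sum_comp (Equiv.piSplitAt i Q).symm
      (fun ρ => (∏ k, s k (ρ k)) * f (ρ i) (ρ j)), Fintype.sum_prod_type]
  refine Finset.sum_congr rfl fun qi _ => ?_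
  have hval : ∀ rest : ∀ k : {k // k ≠ i}, Q k,
      ((Equiv.piSplitAt i Q).symm (qi, rest)) i = qi := by
    intro rest; simp
  have hj : ∀ rest : ∀ k : {k // k ≠ i}, Q k,
      ((Equiv.piSplitAt i Q).symm (qi, rest)) j = rest ⟨j, hij⟩ := by
    intro rest; simp [hij]
  calc ∑ rest : ∀ k : {k // k ≠ i}, Q k,
        (∏ k, s k ((Equiv.piSplitAt i Q).symm (qi, rest) k))
          * f ((Equiv.piSplitAt i Q).symm (qi, rest) i)
            ((Equiv.piSplitAt i Q).symm (qi, rest) j)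
      = ∑ rest : ∀ k : {k // k ≠ i}, Q k,
        s i qi * ((∏ k : {k // k ≠ i}, s k (rest k)) * f qi (rest ⟨j, hij⟩)) := by
        refine Finset.sum_congr rfl fun rest _ => ?_
        rw [piSplitAt_prod, hval, hj]; ring
    _ = s i qi * ∑ qj, s j qj * f qi qj := by
        rw [← Finset.mul_sum,
          expect_single (fun k : {k // k ≠ i} => s k) (fun k => hs k) ⟨j, hij⟩
            (fun qj => f qi qj)]
    _ = ∑ qj, s i qi * s j qj * f qi qj := by
        rw [Finset.mul_sum]; exact Finset.sum_congr rfl fun qj _ => by ring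


lemma marginal_expect {N : Type*} [Fintype N] [DecidableEq N]
    {P : N → Type*} [∀ j, Fintype (P j)] [∀ j, DecidableEq (P j)]
    (μ : (∀ j, P j) → ℝ) (j : N) (g : P j → ℝ) :
    ∑ pj, marginal μ j pj * g pj = ∑ ρ : ∀ k, P k, μ ρ * g (ρ j) := by
  simp only [marginal, Finset.sum_mul]
  rw [Finset.sum_comm]
  refine Finset.sum_congr rfl fun ρ _ => ?_
  simp [ite_mul]

/-- Cai et al.: In a constant-sum polymatrix game, for every CCE `μ`,
every player `i` and every mixed strategy `si` of `i`, the expected utility of deviating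
to `si` while the others play according to `μ` equals `i`'s utility when the others play
their marginal strategies. -/
theorem cce_deviation_equals_marginal_utility
    {N : Type*} [Fintype N] [DecidableEq N]
    {P : N → Type*} [∀ j, Fintype (P j)] [∀ j, DecidableEq (P j)] [∀ j, Nonempty (P j)]
    (u : N → (∀ j, P j) → ℝ)
    (Adj : N → N → Bool) (U : ∀ i j : N, P i → P j → ℝ)
    (hpoly : IsPolymatrix u Adj U) (hcs : IsConstantSumPoly Adj U)
    (μ : (∀ j, P j) → ℝ) (hμd : IsDist μ) (hμ : IsEpsCCE u μ 0)
    (i : N) (si : P i → ℝ) (hsi : IsDist si) :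
    ∑ ρ : ∀ j, P j, μ ρ * (∑ pi : P i, si pi * u i (Function.update ρ i pi))
      = mixedUtil u (Function.update (fun j => marginal μ j) i si) i := by
  
  obtain ⟨⟨hsymm, hirr⟩, hu⟩ := hpoly
  have hnbi : ∀ j ∈ neighbors Adj i, j ≠ i := by
    intro j hj h
    subst h
    simp [neighbors, hirr j] at hj
  have hmarg1 : ∀ j, ∑ pj, marginal μ j pj = 1 := by
    intro j
    have h := marginal_expect μ j (fun _ => (1 : ℝ))
    simpa [hμd.2] using h
  set s' : ∀ j, P j → ℝ := Function.update (fun j => marginal μ j) i si with hs'def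
  have hs'sum : ∀ k, ∑ q, s' k q = 1 := by
    intro k
    by_cases hk : k = i
    · subst hk; simp [hs'def, hsi.2]
    · simp only [hs'def, Function.update_of_ne hk]
      exact hmarg1 k
  have hs'i : s' i = si := by simp [hs'def]
  have hs'j : ∀ j, j ≠ i → s' j = marginal μ j := fun j h => by
    simp [hs'def, Function.update_of_ne h]
  have hRHS : mixedUtil u s' i
      = ∑ j ∈ neighbors Adj i, ∑ pi : P i, ∑ pj : P j,
          si pi * marginal μ j pj * U i j pi pj := by
    calc mixedUtil u s' i
        = ∑ ρ : ∀ k, P k, ∑ j ∈ neighbors Adj i,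
            (∏ k, s' k (ρ k)) * U i j (ρ i) (ρ j) := by
          refine Finset.sum_congr rfl fun ρ _ => ?_
          rw [hu i, polyUtil, Finset.mul_sum]
      _ = ∑ j ∈ neighbors Adj i, ∑ ρ : ∀ k, P k,
            (∏ k, s' k (ρ k)) * U i j (ρ i) (ρ j) := Finset.sum_comm
      _ = ∑ j ∈ neighbors Adj i, ∑ pi : P i, ∑ pj : P j,
            si pi * marginal μ j pj * U i j pi pj := by
          refine Finset.sum_congr rfl fun j hj => ?_
          rw [expect_pair s' hs'sum i j (hnbi j hj) (fun qi qj => U i j qi qj)]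
          refine Finset.sum_congr rfl fun pi _ => Finset.sum_congr rfl fun pj _ => ?_
          rw [hs'i, hs'j j (hnbi j hj)]
  rw [hRHS]
  calc ∑ ρ : ∀ j, P j, μ ρ * (∑ pi : P i, si pi * u i (Function.update ρ i pi))
      = ∑ ρ : ∀ k, P k, ∑ pi : P i, ∑ j ∈ neighbors Adj i,
          μ ρ * (si pi * U i j pi (ρ j)) := by
        refine Finset.sum_congr rfl fun ρ _ => ?_
        rw [Finset.mul_sum]
        refine Finset.sum_congr rfl fun pi _ => ?_
        rw [hu i, polyUtil, Finset.mul_sum, Finset.mul_sum]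
        refine Finset.sum_congr rfl fun j hj => ?_
        rw [Function.update_self, Function.update_of_ne (hnbi j hj)]
    _ = ∑ pi : P i, ∑ ρ : ∀ k, P k, ∑ j ∈ neighbors Adj i,
          μ ρ * (si pi * U i j pi (ρ j)) := Finset.sum_comm
    _ = ∑ pi : P i, ∑ j ∈ neighbors Adj i, ∑ ρ : ∀ k, P k,
          μ ρ * (si pi * U i j pi (ρ j)) := by
        exact Finset.sum_congr rfl fun pi _ => Finset.sum_comm
    _ = ∑ j ∈ neighbors Adj i, ∑ pi : P i, ∑ ρ : ∀ k, P k,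
          μ ρ * (si pi * U i j pi (ρ j)) := Finset.sum_comm
    _ = ∑ j ∈ neighbors Adj i, ∑ pi : P i, ∑ pj : P j,
          si pi * marginal μ j pj * U i j pi pj := by
        refine Finset.sum_congr rfl fun j hj => Finset.sum_congr rfl fun pi _ => ?_
        rw [← marginal_expect μ j (fun pj => si pi * U i j pi pj)]
        exact Finset.sum_congr rfl fun pj _ => by ring
end

section
/- In a two-player constant-sum game, for every ε ≥ 0, every ε-Nash equilibrium mixed-strategy profile s, and each player i, player i's utility at s exceeds their utility against a worst-case opponent by at most ε: u_i(s) − min_{s'_{-i} ∈ S_{-i}} u_i(s_i, s'_{-i}) ≤ ε (equivalently, u_i(s) − u_i(s_i, s'_{-i}) ≤ ε for every mixed strategy s'_{-i} of the other player). -/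
open Finset

/-- In a two-player constant-sum game, an ε-Nash equilibrium strategy loses
at most ε against any opponent mixed strategy, compared to its equilibrium value. -/
theorem two_player_constant_sum_eps_nash_vulnerability
    {P1 P2 : Type*} [Fintype P1] [Fintype P2] [DecidableEq P1] [DecidableEq P2]
    [Nonempty P1] [Nonempty P2]
    (u1 u2 : P1 → P2 → ℝ) (c : ℝ) (hcs : ∀ p q, u1 p q + u2 p q = c)
    (ε : ℝ) (hε : 0 ≤ ε)
    (s1 : P1 → ℝ) (s2 : P2 → ℝ) (h1 : IsDist s1) (h2 : IsDist s2)
    (hNash1 : ∀ p' : P1,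
      (∑ q, s2 q * u1 p' q) - (∑ p, ∑ q, s1 p * s2 q * u1 p q) ≤ ε)
    (hNash2 : ∀ q' : P2,
      (∑ p, s1 p * u2 p q') - (∑ p, ∑ q, s1 p * s2 q * u2 p q) ≤ ε) :
    (∀ s2' : P2 → ℝ, IsDist s2' →
      (∑ p, ∑ q, s1 p * s2 q * u1 p q) - (∑ p, ∑ q, s1 p * s2' q * u1 p q) ≤ ε) ∧
    (∀ s1' : P1 → ℝ, IsDist s1' →
      (∑ p, ∑ q, s1 p * s2 q * u2 p q) - (∑ p, ∑ q, s1' p * s2 q * u2 p q) ≤ ε) := by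
  -- Sum of utilities is c for any pair of distributions.
  have key : ∀ (a : P1 → ℝ) (b : P2 → ℝ), IsDist a → IsDist b →
      (∑ p, ∑ q, a p * b q * u1 p q) + (∑ p, ∑ q, a p * b q * u2 p q) = c := by
    intro a b ha hb
    have h : (∑ p, ∑ q, a p * b q * u1 p q) + (∑ p, ∑ q, a p * b q * u2 p q)
        = ∑ p, ∑ q, a p * b q * c := by
      rw [← Finset.sum_add_distrib]
      refine Finset.sum_congr rfl fun p _ => ?_
      rw [← Finset.sum_add_distrib]
      refine Finset.sum_congr rfl fun q _ => ?_
      rw [← mul_add, hcs]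
    rw [h]
    simp only [mul_assoc, ← Finset.mul_sum]
    simp only [← Finset.sum_mul, hb.2, ha.2, one_mul]
  have hu2bound : ∀ (b : P2 → ℝ), IsDist b →
      (∑ p, ∑ q, s1 p * b q * u2 p q) ≤ (∑ p, ∑ q, s1 p * s2 q * u2 p q) + ε := by
    intro b hb
    have hswap : (∑ p, ∑ q, s1 p * b q * u2 p q)
        = ∑ q, b q * ∑ p, s1 p * u2 p q := by
      rw [Finset.sum_comm]
      refine Finset.sum_congr rfl fun q _ => ?_
      rw [Finset.mul_sum]
      refine Finset.sum_congr rfl fun p _ => ?_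
      ring
    rw [hswap]
    calc ∑ q, b q * ∑ p, s1 p * u2 p q
        ≤ ∑ q, b q * ((∑ p, ∑ q, s1 p * s2 q * u2 p q) + ε) := by
          refine Finset.sum_le_sum fun q _ => ?_
          exact mul_le_mul_of_nonneg_left (by linarith [hNash2 q]) (hb.1 q)
      _ = (∑ p, ∑ q, s1 p * s2 q * u2 p q) + ε := by
          rw [← Finset.sum_mul, hb.2, one_mul]
  have hu1bound : ∀ (a : P1 → ℝ), IsDist a →
      (∑ p, ∑ q, a p * s2 q * u1 p q) ≤ (∑ p, ∑ q, s1 p * s2 q * u1 p q) + ε := by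
    intro a ha
    have hswap : (∑ p, ∑ q, a p * s2 q * u1 p q)
        = ∑ p, a p * ∑ q, s2 q * u1 p q := by
      refine Finset.sum_congr rfl fun p _ => ?_
      rw [Finset.mul_sum]
      refine Finset.sum_congr rfl fun q _ => ?_
      ring
    rw [hswap]
    calc ∑ p, a p * ∑ q, s2 q * u1 p q
        ≤ ∑ p, a p * ((∑ p, ∑ q, s1 p * s2 q * u1 p q) + ε) := by
          refine Finset.sum_le_sum fun p _ => ?_
          exact mul_le_mul_of_nonneg_left (by linarith [hNash1 p]) (ha.1 p)
      _ = (∑ p, ∑ q, s1 p * s2 q * u1 p q) + ε := by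
          rw [← Finset.sum_mul, ha.2, one_mul]
  constructor
  · intro s2' h2'
    have k1 := key s1 s2 h1 h2
    have k2 := key s1 s2' h1 h2'
    have := hu2bound s2' h2'
    linarith
  · intro s1' h1'
    have k1 := key s1 s2 h1 h2
    have k2 := key s1' s2 h1' h2
    have := hu1bound s1' h1'
    linarith
end

section
/- If μ is an ε-coarse correlated equilibrium of an n-player constant-sum polymatrix game G, then the marginal strategy profile s^μ is an nε-Nash equilibrium of G. -/
/-!
A player's payoff in a polymatrix game is a sum of bilateral terms, so a unilateral deviation
meets the other players one at a time and earns exactly as much against the product of the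
marginals of `μ` as against `μ` itself. Averaging the CCE inequality over a player's own marginal
then shows that every player `k` gets at most `E_μ[u_k] + ε` under `s^μ`. Since the game is
constant-sum, `Σ_k u_k(s^μ) = Σ_k E_μ[u_k]`, so player `i` falls at most `(n - 1) ε` short of
`E_μ[u_i]`, while any deviation gains at most `ε` over it.
-/

open Finset

theorem sub_le_card_sub_one_mul_of_sum_eq {ι : Type*} [Fintype ι] {a b : ι → ℝ} {ε : ℝ}
    (hsum : ∑ k, a k = ∑ k, b k) (hle : ∀ k, a k ≤ b k + ε) (i : ι) :
    b i - a i ≤ (Fintype.card ι - 1) * ε := by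
  have hi : b i + ε - a i ≤ ∑ k, (b k + ε - a k) :=
    single_le_sum (f := fun k => b k + ε - a k) (fun k _ => by linarith [hle k]) (mem_univ i)
  rw [sum_sub_distrib, sum_add_distrib, ← hsum, sum_const, card_univ, nsmul_eq_mul] at hi
  linarith

section Marginals

variable {N : Type*} [Fintype N] [DecidableEq N] {P : N → Type*} [∀ j, Fintype (P j)]
  [∀ j, DecidableEq (P j)]

theorem sum_mul_apply_eq_sum_marginal_mul (μ : (∀ k, P k) → ℝ) (j : N) (h : P j → ℝ) :
    ∑ ρ : ∀ k, P k, μ ρ * h (ρ j) = ∑ p, marginal μ j p * h p := by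
  simp_rw [marginal, sum_mul, ite_mul, zero_mul]
  rw [sum_comm]
  simp

theorem sum_marginal (μ : (∀ k, P k) → ℝ) (j : N) : ∑ p, marginal μ j p = ∑ ρ, μ ρ := by
  simpa using (sum_mul_apply_eq_sum_marginal_mul μ j 1).symm

theorem IsDist.isMixedProfile_marginal {μ : (∀ k, P k) → ℝ} (hμ : IsDist μ) :
    IsMixedProfile (fun j => marginal μ j) :=
  fun j => ⟨fun _ => sum_nonneg fun ρ _ => by split_ifs <;> simp [hμ.1 ρ],
    (sum_marginal μ j).trans hμ.2⟩

end Marginals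

section ProductWeights

variable {N : Type*} [Fintype N] [DecidableEq N] {P : N → Type*} [∀ j, Fintype (P j)]

theorem sum_prod_eq_one {s : ∀ k, P k → ℝ} (hs : ∀ k, ∑ p, s k p = 1) :
    ∑ ρ : ∀ k, P k, ∏ k, s k (ρ k) = 1 := by
  rw [← Fintype.prod_sum]
  exact prod_eq_one fun k _ => hs k

theorem sum_prod_mul_apply {s : ∀ k, P k → ℝ} (j : N) (hs : ∀ k ≠ j, ∑ p, s k p = 1)
    (h : P j → ℝ) :
    ∑ ρ : ∀ k, P k, (∏ k, s k (ρ k)) * h (ρ j) = ∑ p, s j p * h p := by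
  set t := Function.update s j (fun p => s j p * h p)
  have ht : ∀ k ∈ univ.erase j, t k = s k := fun k hk =>
    Function.update_of_ne (ne_of_mem_erase hk) _ _
  have absorb : ∀ ρ : ∀ k, P k, (∏ k, s k (ρ k)) * h (ρ j) = ∏ k, t k (ρ k) := by
    intro ρ
    rw [← mul_prod_erase univ (fun k => t k (ρ k)) (mem_univ j),
      prod_congr rfl fun k hk => congrFun (ht k hk) (ρ k), ← mul_prod_erase univ _ (mem_univ j)]
    simp only [t, Function.update_self]
    ring
  rw [sum_congr rfl fun ρ _ => absorb ρ, ← Fintype.prod_sum,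
    ← mul_prod_erase univ _ (mem_univ j),
    prod_eq_one fun k hk => by rw [ht k hk, hs k (ne_of_mem_erase hk)]]
  simp [t]

theorem sum_sum_mul_eq_of_sum_eq {α ι : Type*} [Fintype α] [Fintype ι] {w : α → ℝ}
    (hw : ∑ a, w a = 1) {u : ι → α → ℝ} {C : ℝ} (hC : ∀ a, ∑ i, u i a = C) :
    ∑ i, ∑ a, w a * u i a = C := by
  rw [sum_comm]
  simp_rw [← mul_sum, hC, ← sum_mul, hw, one_mul]

end ProductWeights

section PureDeviation

variable {N : Type*} [DecidableEq N] {P : N → Type*} [∀ j, DecidableEq (P j)]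

theorem sum_pureMix {A : Type*} [Fintype A] [DecidableEq A] (a : A) : ∑ b, pureMix a b = 1 := by
  simp [pureMix]

theorem sum_update_pureMix [∀ j, Fintype (P j)] {s : ∀ k, P k → ℝ} (hs : ∀ k, ∑ p, s k p = 1)
    (i : N) (a : P i) (k : N) :
    ∑ p, Function.update s i (pureMix a) k p = 1 := by
  by_cases hki : k = i
  · subst hki
    simpa using sum_pureMix a
  · simpa [Function.update_of_ne hki] using hs k

variable [Fintype N]

theorem mul_prod_update_pureMix (s : ∀ k, P k → ℝ) (i : N) (a : P i) (ρ : ∀ k, P k) :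
    s i a * ∏ k, Function.update s i (pureMix a) k (ρ k)
      = if ρ i = a then ∏ k, s k (ρ k) else 0 := by
  rw [← mul_prod_erase univ _ (mem_univ i),
    ← mul_prod_erase univ (fun k => s k (ρ k)) (mem_univ i),
    prod_congr rfl fun k hk => by rw [Function.update_of_ne (ne_of_mem_erase hk)]]
  by_cases h : ρ i = a
  · subst h
    simp [pureMix]
  · simp [pureMix, h]

theorem prod_update_pureMix_mul (s : ∀ k, P k → ℝ) (i : N) (a : P i) (ρ : ∀ k, P k)
    (g : P i → ℝ) :
    (∏ k, Function.update s i (pureMix a) k (ρ k)) * g (ρ i)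
      = (∏ k, Function.update s i (pureMix a) k (ρ k)) * g a := by
  by_cases h : ρ i = a
  · rw [h]
  · rw [prod_eq_zero (mem_univ i) (by simp [pureMix, h]), zero_mul, zero_mul]

variable [∀ j, Fintype (P j)]

theorem mixedUtil_eq_sum_mul_mixedUtil_update (u : N → (∀ j, P j) → ℝ) (s : ∀ j, P j → ℝ)
    (i : N) :
    mixedUtil u s i = ∑ a, s i a * mixedUtil u (Function.update s i (pureMix a)) i := by
  simp_rw [mixedUtil, mul_sum, ← mul_assoc, mul_prod_update_pureMix, ite_mul, zero_mul]
  rw [sum_comm]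
  simp

theorem mixedUtil_le_of_forall_update_pureMix_le {u : N → (∀ j, P j) → ℝ} {s : ∀ j, P j → ℝ}
    {i : N} (hs : IsDist (s i)) {B : ℝ}
    (hB : ∀ a, mixedUtil u (Function.update s i (pureMix a)) i ≤ B) :
    mixedUtil u s i ≤ B :=
  calc mixedUtil u s i
      = ∑ a, s i a * mixedUtil u (Function.update s i (pureMix a)) i :=
        mixedUtil_eq_sum_mul_mixedUtil_update u s i
    _ ≤ ∑ a, s i a * B := sum_le_sum fun a _ => mul_le_mul_of_nonneg_left (hB a) (hs.1 a)
    _ = B := by rw [← sum_mul, hs.2, one_mul]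

end PureDeviation

section Polymatrix

variable {N : Type*} [Fintype N] {Adj : N → N → Bool}

theorem IsAdj.ne_of_mem_neighbors (hadj : IsAdj Adj) {i j : N} (hj : j ∈ neighbors Adj i) :
    j ≠ i := by
  rintro rfl
  simp [neighbors, hadj.2 j] at hj

theorem IsAdj.sum_neighbors_comm (hadj : IsAdj Adj) (F : N → N → ℝ) :
    ∑ i, ∑ j ∈ neighbors Adj i, F i j = ∑ i, ∑ j ∈ neighbors Adj i, F j i :=
  sum_comm' fun i j => by simp [neighbors, hadj.1 i j]

variable {P : N → Type*} {U : ∀ i j : N, P i → P j → ℝ}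

theorem IsConstantSumPoly.exists_sum_polyUtil_eq (hcs : IsConstantSumPoly Adj U)
    (hadj : IsAdj Adj) : ∃ C : ℝ, ∀ ρ : ∀ j, P j, ∑ i, polyUtil Adj U i ρ = C := by
  have : ∀ i j, ∃ c : ℝ, Adj i j → ∀ (a : P i) (b : P j), U i j a b + U j i b a = c := fun i j =>
    if h : Adj i j then (hcs i j h).imp fun _ hc _ => hc else ⟨0, fun h' => absurd h' h⟩
  choose c hc using this
  refine ⟨(∑ i, ∑ j ∈ neighbors Adj i, c i j) / 2, fun ρ => ?_⟩
  -- every edge is counted once from each endpoint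
  have double : 2 * ∑ i, polyUtil Adj U i ρ = ∑ i, ∑ j ∈ neighbors Adj i, c i j := by
    simp only [polyUtil]
    rw [two_mul]
    nth_rw 2 [hadj.sum_neighbors_comm]
    simp_rw [← sum_add_distrib]
    exact sum_congr rfl fun i _ => sum_congr rfl fun j hj =>
      hc i j (mem_filter.mp hj).2 (ρ i) (ρ j)
  linarith

variable [DecidableEq N] [∀ j, Fintype (P j)] [∀ j, DecidableEq (P j)]

theorem mixedUtil_update_pureMix_eq_sum_neighbors {u : N → (∀ j, P j) → ℝ}
    (hpoly : IsPolymatrix u Adj U) {s : ∀ j, P j → ℝ} (hs : ∀ k, ∑ p, s k p = 1) (i : N)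
    (a : P i) :
    mixedUtil u (Function.update s i (pureMix a)) i
      = ∑ j ∈ neighbors Adj i, ∑ b, s j b * U i j a b := by
  simp_rw [mixedUtil, hpoly.2, polyUtil, mul_sum]
  rw [sum_comm]
  refine sum_congr rfl fun j hj => ?_
  have hji := hpoly.1.ne_of_mem_neighbors hj
  rw [sum_congr rfl fun ρ _ => prod_update_pureMix_mul s i a ρ (fun x => U i j x (ρ j)),
    sum_prod_mul_apply j (fun k _ => sum_update_pureMix hs i a k)]
  simp [Function.update_of_ne hji]

theorem sum_mul_polyUtil_update_eq_sum_neighbors (hadj : IsAdj Adj) (μ : (∀ j, P j) → ℝ)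
    (i : N) (a : P i) :
    ∑ ρ : ∀ j, P j, μ ρ * polyUtil Adj U i (Function.update ρ i a)
      = ∑ j ∈ neighbors Adj i, ∑ b, marginal μ j b * U i j a b := by
  simp_rw [polyUtil, mul_sum]
  rw [sum_comm]
  refine sum_congr rfl fun j hj => ?_
  simp_rw [Function.update_self, Function.update_of_ne (hadj.ne_of_mem_neighbors hj)]
  exact sum_mul_apply_eq_sum_marginal_mul μ j _

theorem mixedUtil_marginal_update_pureMix {u : N → (∀ j, P j) → ℝ}
    (hpoly : IsPolymatrix u Adj U) {μ : (∀ j, P j) → ℝ} (hμ : ∑ ρ, μ ρ = 1) (i : N) (a : P i) :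
    mixedUtil u (Function.update (fun j => marginal μ j) i (pureMix a)) i
      = ∑ ρ : ∀ j, P j, μ ρ * u i (Function.update ρ i a) := by
  rw [mixedUtil_update_pureMix_eq_sum_neighbors hpoly (fun k => (sum_marginal μ k).trans hμ)]
  simp_rw [hpoly.2]
  exact (sum_mul_polyUtil_update_eq_sum_neighbors hpoly.1 μ i a).symm

end Polymatrix

theorem eps_cce_marginal_is_n_eps_nash_general
    {N : Type*} [Fintype N] [DecidableEq N]
    {P : N → Type*} [∀ j, Fintype (P j)] [∀ j, DecidableEq (P j)]
    (u : N → (∀ j, P j) → ℝ)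
    (Adj : N → N → Bool) (U : ∀ i j : N, P i → P j → ℝ)
    (hpoly : IsPolymatrix u Adj U) (hcs : IsConstantSumPoly Adj U)
    (ε : ℝ)
    (μ : (∀ j, P j) → ℝ) (hμd : IsDist μ) (hμ : IsEpsCCE u μ ε) :
    IsEpsNash u (fun j => marginal μ j) ((Fintype.card N : ℝ) * ε) := by
  obtain ⟨C, hC⟩ := hcs.exists_sum_polyUtil_eq hpoly.1
  simp_rw [← hpoly.2] at hC
  set s := fun j => marginal μ j
  have hs : IsMixedProfile s := hμd.isMixedProfile_marginal
  have deviation : ∀ k a, mixedUtil u (Function.update s k (pureMix a)) k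
      ≤ ∑ ρ, μ ρ * u k ρ + ε := by
    intro k a
    have hcce := hμ k a
    simp_rw [mul_sub, sum_sub_distrib] at hcce
    rw [mixedUtil_marginal_update_pureMix hpoly hμd.2]
    linarith
  have total : ∑ k, mixedUtil u s k = ∑ k, ∑ ρ, μ ρ * u k ρ :=
    (sum_sum_mul_eq_of_sum_eq (sum_prod_eq_one fun k => (hs k).2) hC).trans
      (sum_sum_mul_eq_of_sum_eq hμd.2 hC).symm
  intro i a
  have hi := sub_le_card_sub_one_mul_of_sum_eq total
    (fun k => mixedUtil_le_of_forall_update_pureMix_le (hs k) (deviation k)) i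
  linarith [deviation i a]

/-- If `μ` is an ε-CCE of an n-player constant-sum polymatrix game, then the
marginal strategy profile `s^μ` is an nε-Nash equilibrium of that game. -/
theorem eps_cce_marginal_is_n_eps_nash
    {N : Type*} [Fintype N] [DecidableEq N]
    {P : N → Type*} [∀ j, Fintype (P j)] [∀ j, DecidableEq (P j)] [∀ j, Nonempty (P j)]
    (u : N → (∀ j, P j) → ℝ)
    (Adj : N → N → Bool) (U : ∀ i j : N, P i → P j → ℝ)
    (hpoly : IsPolymatrix u Adj U) (hcs : IsConstantSumPoly Adj U)
    (ε : ℝ) (hε : 0 ≤ ε)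
    (μ : (∀ j, P j) → ℝ) (hμd : IsDist μ) (hμ : IsEpsCCE u μ ε) :
    IsEpsNash u (fun j => marginal μ j) ((Fintype.card N : ℝ) * ε) :=
  eps_cce_marginal_is_n_eps_nash_general u Adj U hpoly hcs ε μ hμd hμ
end

section
/- Let G be a constant-sum polymatrix game that is (0,γ)-subgame stable. Then for every player i and every coarse correlated equilibrium μ of G, the vulnerability of the marginal strategy profile s^μ for player i with respect to the set of all opponent mixed-strategy profiles is at most |E_i|·γ: u_i(s^μ) − u_i(s^μ_i, s'_{-i}) ≤ |E_i|·γ for every opponent mixed-strategy profile s'_{-i}, where |E_i| is the number of edges containing i. -/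
open Finset

section Aux
set_option linter.unusedSectionVars false
variable {N : Type*} [Fintype N] [DecidableEq N]
variable {P : N → Type*} [∀ j, Fintype (P j)] [∀ j, DecidableEq (P j)] [∀ j, Nonempty (P j)]

lemma sum_pi_prod_s4 (f : ∀ j, P j → ℝ) :
    ∑ ρ : ∀ j, P j, ∏ j, f j (ρ j) = ∏ j, ∑ x, f j x := by
  rw [Finset.prod_univ_sum, Fintype.piFinset_univ]

lemma marg_two (t : ∀ j, P j → ℝ) (ht : ∀ k, ∑ x, t k x = 1)
    {i j : N} (hij : i ≠ j) (g : P i → P j → ℝ) :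
    ∑ ρ : ∀ k, P k, (∏ k, t k (ρ k)) * g (ρ i) (ρ j)
      = ∑ pi, ∑ pj, t i pi * t j pj * g pi pj := by
  have key : ∀ (pi : P i) (pj : P j),
      (∑ ρ : ∀ k, P k, if ρ i = pi ∧ ρ j = pj then ∏ k, t k (ρ k) else 0)
        = t i pi * t j pj := by
    intro pi pj
    set f : ∀ k, P k → ℝ := Function.update
      (Function.update t i fun x => if x = pi then t i pi else 0) j
      (fun x => if x = pj then t j pj else 0) with hf
    have hfi : f i = fun x => if x = pi then t i pi else 0 := by
      rw [hf, Function.update_of_ne hij, Function.update_self]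
    have hfj : f j = fun x => if x = pj then t j pj else 0 := by
      rw [hf, Function.update_self]
    have hfk : ∀ k, k ≠ i → k ≠ j → f k = t k := by
      intro k h1 h2
      rw [hf, Function.update_of_ne h2, Function.update_of_ne h1]
    have hpt : ∀ ρ : ∀ k, P k,
        (if ρ i = pi ∧ ρ j = pj then ∏ k, t k (ρ k) else 0) = ∏ k, f k (ρ k) := by
      intro ρ
      by_cases h1 : ρ i = pi
      · by_cases h2 : ρ j = pj
        · rw [if_pos ⟨h1, h2⟩]
          refine Finset.prod_congr rfl fun k _ => ?_
          rcases eq_or_ne k i with rfl | hki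
          · rw [hfi]; simp [h1]
          · rcases eq_or_ne k j with rfl | hkj
            · rw [hfj]; simp [h2]
            · rw [hfk k hki hkj]
        · rw [if_neg (by tauto)]
          symm
          exact Finset.prod_eq_zero (Finset.mem_univ j) (by rw [hfj]; simp [h2])
      · rw [if_neg (by tauto)]
        symm
        exact Finset.prod_eq_zero (Finset.mem_univ i) (by rw [hfi]; simp [h1])
    rw [Finset.sum_congr rfl fun ρ _ => hpt ρ, sum_pi_prod_s4]
    have h1 : ∑ x, f i x = t i pi := by rw [hfi]; simp
    have h2 : ∑ x, f j x = t j pj := by rw [hfj]; simp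
    have hone : ∀ k ∈ Finset.univ, k ∉ ({i, j} : Finset N) → ∑ x, f k x = 1 := by
      intro k _ hk
      simp only [Finset.mem_insert, Finset.mem_singleton, not_or] at hk
      rw [hfk k hk.1 hk.2]
      exact ht k
    rw [← Finset.prod_subset (Finset.subset_univ ({i, j} : Finset N)) hone,
      Finset.prod_pair hij, h1, h2]
  calc ∑ ρ : ∀ k, P k, (∏ k, t k (ρ k)) * g (ρ i) (ρ j)
      = ∑ ρ : ∀ k, P k, ∑ pi, ∑ pj,
          (if ρ i = pi ∧ ρ j = pj then (∏ k, t k (ρ k)) * g pi pj else 0) := by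
        refine Finset.sum_congr rfl fun ρ _ => ?_
        simp [ite_and, Finset.sum_ite_eq]
    _ = ∑ pi, ∑ pj, ∑ ρ : ∀ k, P k,
          (if ρ i = pi ∧ ρ j = pj then (∏ k, t k (ρ k)) * g pi pj else 0) := by
        rw [Finset.sum_comm]
        refine Finset.sum_congr rfl fun pi _ => Finset.sum_comm
    _ = ∑ pi, ∑ pj, t i pi * t j pj * g pi pj := by
        refine Finset.sum_congr rfl fun pi _ => Finset.sum_congr rfl fun pj _ => ?_
        calc ∑ ρ : ∀ k, P k, (if ρ i = pi ∧ ρ j = pj then (∏ k, t k (ρ k)) * g pi pj else 0)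
            = (∑ ρ : ∀ k, P k, if ρ i = pi ∧ ρ j = pj then (∏ k, t k (ρ k)) else 0) * g pi pj := by
              rw [Finset.sum_mul]
              refine Finset.sum_congr rfl fun ρ _ => ?_
              rw [ite_mul, zero_mul]
          _ = t i pi * t j pj * g pi pj := by rw [key]

lemma marg_mu (μ : (∀ j, P j) → ℝ) (j : N) (h : P j → ℝ) :
    ∑ ρ : ∀ k, P k, μ ρ * h (ρ j) = ∑ pj, marginal μ j pj * h pj := by
  symm
  calc ∑ pj, marginal μ j pj * h pj
      = ∑ pj, ∑ ρ : ∀ k, P k, (if ρ j = pj then μ ρ * h pj else 0) := by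
        refine Finset.sum_congr rfl fun pj _ => ?_
        rw [marginal, Finset.sum_mul]
        exact Finset.sum_congr rfl fun ρ _ => by rw [ite_mul, zero_mul]
    _ = ∑ ρ : ∀ k, P k, ∑ pj, (if ρ j = pj then μ ρ * h pj else 0) := Finset.sum_comm
    _ = ∑ ρ : ∀ k, P k, μ ρ * h (ρ j) := by
        refine Finset.sum_congr rfl fun ρ _ => ?_
        simp

lemma marginal_isDist (μ : (∀ j, P j) → ℝ) (hμ : IsDist μ) (j : N) :
    IsDist (marginal μ j) := by
  constructor
  · intro pj
    refine Finset.sum_nonneg fun ρ _ => ?_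
    by_cases h : ρ j = pj <;> simp [h, hμ.1 ρ]
  · simp only [marginal]
    rw [Finset.sum_comm]
    simp [hμ.2]

lemma subUtil_pure (U : ∀ i j : N, P i → P j → ℝ) (i j : N) (pi' : P i) (b : P j → ℝ) :
    subUtil U i j (pureMix pi') b = ∑ pj, b pj * U i j pi' pj := by
  rw [subUtil, Finset.sum_comm]
  simp [pureMix, ite_mul, Finset.sum_ite_eq']

lemma subUtil_convex (U : ∀ i j : N, P i → P j → ℝ) (i j : N) (a : P i → ℝ) (b : P j → ℝ) :
    subUtil U i j a b = ∑ pi, a pi * subUtil U i j (pureMix pi) b := by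
  rw [subUtil]
  refine Finset.sum_congr rfl fun pi _ => ?_
  rw [subUtil_pure, Finset.mul_sum]
  exact Finset.sum_congr rfl fun pj _ => by ring

lemma subUtil_cs (U : ∀ i j : N, P i → P j → ℝ) (i j : N) {c : ℝ}
    (h : ∀ (pi : P i) (pj : P j), U i j pi pj + U j i pj pi = c)
    (a : P i → ℝ) (b : P j → ℝ) (ha : ∑ x, a x = 1) (hb : ∑ x, b x = 1) :
    subUtil U i j a b + subUtil U j i b a = c := by
  have hcomm : (∑ pj : P j, ∑ pi : P i, b pj * a pi * U j i pj pi)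
       = ∑ pi : P i, ∑ pj : P j, b pj * a pi * U j i pj pi := Finset.sum_comm
  rw [subUtil, subUtil, hcomm, ← Finset.sum_add_distrib]
  calc ∑ pi, (∑ pj, a pi * b pj * U i j pi pj + ∑ pj, b pj * a pi * U j i pj pi)
      = ∑ pi, a pi * ((∑ pj, b pj) * c) := by
        refine Finset.sum_congr rfl fun pi _ => ?_
        rw [← Finset.sum_add_distrib, Finset.sum_mul, Finset.mul_sum]
        refine Finset.sum_congr rfl fun pj _ => ?_
        rw [← h pi pj]; ring
    _ = c := by rw [hb, one_mul, ← Finset.sum_mul, ha, one_mul]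

lemma mem_neighbors_iff {Adj : N → N → Bool} {i j : N} :
    j ∈ neighbors Adj i ↔ Adj i j := by simp [neighbors]

lemma neighbors_ne {Adj : N → N → Bool} (hAdj : IsAdj Adj) {i j : N}
    (h : j ∈ neighbors Adj i) : j ≠ i := by
  rintro rfl
  rw [mem_neighbors_iff] at h
  rw [hAdj.2 j] at h
  exact absurd h (by simp)

lemma poly_mixed (u : N → (∀ j, P j) → ℝ) (Adj : N → N → Bool) (U : ∀ i j : N, P i → P j → ℝ)
    (hpoly : IsPolymatrix u Adj U) (t : ∀ j, P j → ℝ) (ht : ∀ k, ∑ x, t k x = 1) (i : N) :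
    mixedUtil u t i = ∑ j ∈ neighbors Adj i, subUtil U i j (t i) (t j) := by
  calc mixedUtil u t i
      = ∑ ρ : ∀ k, P k, ∑ j ∈ neighbors Adj i, (∏ k, t k (ρ k)) * U i j (ρ i) (ρ j) := by
        rw [mixedUtil]
        refine Finset.sum_congr rfl fun ρ _ => ?_
        rw [hpoly.2 i ρ, polyUtil, Finset.mul_sum]
    _ = ∑ j ∈ neighbors Adj i, ∑ ρ : ∀ k, P k, (∏ k, t k (ρ k)) * U i j (ρ i) (ρ j) :=
        Finset.sum_comm
    _ = ∑ j ∈ neighbors Adj i, subUtil U i j (t i) (t j) := by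
        refine Finset.sum_congr rfl fun j hj => ?_
        rw [marg_two t ht (neighbors_ne hpoly.1 hj).symm (U i j), subUtil]

lemma update_sum_one (t : ∀ j, P j → ℝ) (ht : ∀ k, ∑ x, t k x = 1)
    (k : N) (σ : P k → ℝ) (hσ : ∑ x, σ x = 1) (m : N) :
    ∑ x, (Function.update t k σ) m x = 1 := by
  rcases eq_or_ne m k with rfl | h
  · rw [Function.update_self]; exact hσ
  · rw [Function.update_of_ne h]; exact ht m

lemma poly_mixed_update (u : N → (∀ j, P j) → ℝ) (Adj : N → N → Bool)
    (U : ∀ i j : N, P i → P j → ℝ) (hpoly : IsPolymatrix u Adj U)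
    (t : ∀ j, P j → ℝ) (ht : ∀ k, ∑ x, t k x = 1)
    (k : N) (σ : P k → ℝ) (hσ : ∑ x, σ x = 1) :
    mixedUtil u (Function.update t k σ) k = ∑ j ∈ neighbors Adj k, subUtil U k j σ (t j) := by
  rw [poly_mixed u Adj U hpoly _ (update_sum_one t ht k σ hσ) k]
  refine Finset.sum_congr rfl fun j hj => ?_
  rw [Function.update_self, Function.update_of_ne (neighbors_ne hpoly.1 hj)]

lemma sum_util_eq (u : N → (∀ j, P j) → ℝ) (Adj : N → N → Bool)
    (U : ∀ i j : N, P i → P j → ℝ) (hpoly : IsPolymatrix u Adj U)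
    (hcs : IsConstantSumPoly Adj U) (ρ ρ' : ∀ j, P j) :
    ∑ k, u k ρ = ∑ k, u k ρ' := by
  classical
  choose! c hc using hcs
  have key : ∀ σ : ∀ j, P j,
      (∑ k, u k σ) + (∑ k, u k σ) = ∑ k, ∑ j, (if Adj k j then c k j else 0) := by
    intro σ
    have h1 : ∑ k, u k σ = ∑ k, ∑ j, (if Adj k j then U k j (σ k) (σ j) else 0) := by
      refine Finset.sum_congr rfl fun k _ => ?_
      rw [hpoly.2 k σ, polyUtil, neighbors, Finset.sum_filter]
    have h2 : ∑ k, u k σ = ∑ k, ∑ j, (if Adj k j then U j k (σ j) (σ k) else 0) := by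
      rw [h1, Finset.sum_comm]
      refine Finset.sum_congr rfl fun k _ => Finset.sum_congr rfl fun j _ => ?_
      rw [hpoly.1.1 j k]
    calc (∑ k, u k σ) + (∑ k, u k σ)
        = (∑ k, ∑ j, (if Adj k j then U k j (σ k) (σ j) else 0))
          + (∑ k, ∑ j, (if Adj k j then U j k (σ j) (σ k) else 0)) :=
          congrArg₂ (· + ·) h1 h2
      _ = ∑ k, ∑ j, (if Adj k j then c k j else 0) := by
          rw [← Finset.sum_add_distrib]
          refine Finset.sum_congr rfl fun k _ => ?_
          rw [← Finset.sum_add_distrib]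
          refine Finset.sum_congr rfl fun j _ => ?_
          by_cases h : Adj k j = true
          · simp only [h, if_true]
            exact hc k j h (σ k) (σ j)
          · simp [h]
  have := (key ρ).trans (key ρ').symm
  linarith

lemma cce_dev_le (u : N → (∀ j, P j) → ℝ) (Adj : N → N → Bool)
    (U : ∀ i j : N, P i → P j → ℝ) (hpoly : IsPolymatrix u Adj U)
    (μ : (∀ j, P j) → ℝ) (hμd : IsDist μ) (hμ : IsEpsCCE u μ 0) (k : N) (pk' : P k) :
    mixedUtil u (Function.update (fun j => marginal μ j) k (pureMix pk')) k
      ≤ ∑ ρ : ∀ j, P j, μ ρ * u k ρ := by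
  have h := hμ k pk'
  have hexp : ∑ ρ : ∀ j, P j, μ ρ * (u k (Function.update ρ k pk') - u k ρ)
      = (∑ ρ : ∀ j, P j, μ ρ * u k (Function.update ρ k pk'))
        - ∑ ρ : ∀ j, P j, μ ρ * u k ρ := by
    rw [← Finset.sum_sub_distrib]
    exact Finset.sum_congr rfl fun ρ _ => by ring
  have hpure : ∑ x, pureMix pk' x = 1 := by simp [pureMix]
  have hdev : ∑ ρ : ∀ j, P j, μ ρ * u k (Function.update ρ k pk')
      = mixedUtil u (Function.update (fun j => marginal μ j) k (pureMix pk')) k := by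
    rw [poly_mixed_update u Adj U hpoly _ (fun m => (marginal_isDist μ hμd m).2) k _ hpure]
    calc ∑ ρ : ∀ j, P j, μ ρ * u k (Function.update ρ k pk')
        = ∑ ρ : ∀ j, P j, ∑ j ∈ neighbors Adj k, μ ρ * U k j pk' (ρ j) := by
          refine Finset.sum_congr rfl fun ρ _ => ?_
          rw [hpoly.2 k, polyUtil, Finset.mul_sum]
          refine Finset.sum_congr rfl fun j hj => ?_
          rw [Function.update_self, Function.update_of_ne (neighbors_ne hpoly.1 hj)]
      _ = ∑ j ∈ neighbors Adj k, ∑ ρ : ∀ j, P j, μ ρ * U k j pk' (ρ j) := Finset.sum_comm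
      _ = ∑ j ∈ neighbors Adj k, subUtil U k j (pureMix pk') (marginal μ j) := by
          refine Finset.sum_congr rfl fun j hj => ?_
          rw [marg_mu μ j (fun pj => U k j pk' pj), subUtil_pure]
  rw [hexp, hdev] at h
  linarith

lemma cce_marginal_nash (u : N → (∀ j, P j) → ℝ) (Adj : N → N → Bool)
    (U : ∀ i j : N, P i → P j → ℝ) (hpoly : IsPolymatrix u Adj U)
    (hcs : IsConstantSumPoly Adj U)
    (μ : (∀ j, P j) → ℝ) (hμd : IsDist μ) (hμ : IsEpsCCE u μ 0) :
    IsEpsNash u (fun j => marginal μ j) 0 := by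
  classical
  set s : ∀ j, P j → ℝ := fun j => marginal μ j with hs_def
  have hsD : ∀ j, IsDist (s j) := fun j => marginal_isDist μ hμd j
  have hts : ∀ k, ∑ x, s k x = 1 := fun k => (hsD k).2
  set V : N → ℝ := fun k => ∑ ρ : ∀ j, P j, μ ρ * u k ρ with hV_def
  have hdev : ∀ (k : N) (pk' : P k),
      mixedUtil u (Function.update s k (pureMix pk')) k ≤ V k := fun k pk' =>
    cce_dev_le u Adj U hpoly μ hμd hμ k pk'
  have hAform : ∀ k, mixedUtil u s k
      = ∑ pk, s k pk * mixedUtil u (Function.update s k (pureMix pk)) k := by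
    intro k
    rw [poly_mixed u Adj U hpoly s hts k]
    calc ∑ j ∈ neighbors Adj k, subUtil U k j (s k) (s j)
        = ∑ j ∈ neighbors Adj k, ∑ pk, s k pk * subUtil U k j (pureMix pk) (s j) :=
          Finset.sum_congr rfl fun j _ => subUtil_convex U k j (s k) (s j)
      _ = ∑ pk, ∑ j ∈ neighbors Adj k, s k pk * subUtil U k j (pureMix pk) (s j) :=
          Finset.sum_comm
      _ = ∑ pk, s k pk * mixedUtil u (Function.update s k (pureMix pk)) k := by
          refine Finset.sum_congr rfl fun pk _ => ?_
          rw [poly_mixed_update u Adj U hpoly s hts k (pureMix pk) (by simp [pureMix]),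
            Finset.mul_sum]
  have hAleV : ∀ k, mixedUtil u s k ≤ V k := by
    intro k
    rw [hAform k]
    calc ∑ pk, s k pk * mixedUtil u (Function.update s k (pureMix pk)) k
        ≤ ∑ pk, s k pk * V k := Finset.sum_le_sum fun pk _ =>
          mul_le_mul_of_nonneg_left (hdev k pk) ((hsD k).1 pk)
      _ = V k := by rw [← Finset.sum_mul, hts k, one_mul]
  have hsum : ∑ k, mixedUtil u s k = ∑ k, V k := by
    have hρ0 : Nonempty (∀ j, P j) := ⟨fun j => Classical.arbitrary _⟩
    obtain ⟨ρ0⟩ := hρ0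
    have hC : ∀ ρ, ∑ k, u k ρ = ∑ k, u k ρ0 := fun ρ =>
      sum_util_eq u Adj U hpoly hcs ρ ρ0
    have h1 : ∑ k, mixedUtil u s k = (∑ k, u k ρ0) := by
      calc ∑ k, mixedUtil u s k
          = ∑ ρ : ∀ j, P j, (∏ j, s j (ρ j)) * ∑ k, u k ρ := by
            simp only [mixedUtil]
            rw [Finset.sum_comm]
            exact Finset.sum_congr rfl fun ρ _ => by rw [Finset.mul_sum]
        _ = ∑ ρ : ∀ j, P j, (∏ j, s j (ρ j)) * ∑ k, u k ρ0 := by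
            exact Finset.sum_congr rfl fun ρ _ => by rw [hC ρ]
        _ = (∑ ρ : ∀ j, P j, ∏ j, s j (ρ j)) * ∑ k, u k ρ0 := by
            rw [Finset.sum_mul]
        _ = ∑ k, u k ρ0 := by
            rw [sum_pi_prod_s4]
            simp [hts]
    have h2 : ∑ k, V k = ∑ k, u k ρ0 := by
      calc ∑ k, V k
          = ∑ ρ : ∀ j, P j, μ ρ * ∑ k, u k ρ := by
            rw [Finset.sum_comm]
            exact Finset.sum_congr rfl fun ρ _ => by rw [Finset.mul_sum]
        _ = ∑ ρ : ∀ j, P j, μ ρ * ∑ k, u k ρ0 := by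
            exact Finset.sum_congr rfl fun ρ _ => by rw [hC ρ]
        _ = ∑ k, u k ρ0 := by rw [← Finset.sum_mul, hμd.2, one_mul]
    rw [h1, h2]
  have heq : ∀ k, mixedUtil u s k = V k := by
    by_contra hne
    push_neg at hne
    obtain ⟨k, hk⟩ := hne
    have hlt : mixedUtil u s k < V k := lt_of_le_of_ne (hAleV k) hk
    have : ∑ k, mixedUtil u s k < ∑ k, V k :=
      Finset.sum_lt_sum (fun m _ => hAleV m) ⟨k, Finset.mem_univ k, hlt⟩
    linarith
  intro k pk'
  have h1 := hdev k pk'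
  have h2 := heq k
  linarith

lemma edge_vuln (U : ∀ i j : N, P i → P j → ℝ) (i j : N) {c : ℝ}
    (hc : ∀ (pi : P i) (pj : P j), U i j pi pj + U j i pj pi = c)
    (si : P i → ℝ) (sj : P j → ℝ) (b : P j → ℝ)
    (hsi : ∑ x, si x = 1) (hsj : ∑ x, sj x = 1) (hb : IsDist b) (γ : ℝ)
    (hsub : ∀ pj' : P j, subUtil U j i (pureMix pj') si - subUtil U j i sj si ≤ γ) :
    subUtil U i j si sj - subUtil U i j si b ≤ γ := by
  have h1 := subUtil_cs U i j hc si sj hsi hsj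
  have h2 := subUtil_cs U i j hc si b hsi hb.2
  have h3 : subUtil U j i b si ≤ subUtil U j i sj si + γ := by
    rw [subUtil_convex U j i b si]
    calc ∑ pj, b pj * subUtil U j i (pureMix pj) si
        ≤ ∑ pj, b pj * (subUtil U j i sj si + γ) := Finset.sum_le_sum fun pj _ =>
          mul_le_mul_of_nonneg_left (by linarith [hsub pj]) (hb.1 pj)
      _ = subUtil U j i sj si + γ := by rw [← Finset.sum_mul, hb.2, one_mul]
  linarith

end Aux

/-- If a constant-sum polymatrix game is (0,γ)-subgame stable, then for any
player `i` and any CCE `μ`, the vulnerability of the marginal strategy profile `s^μ` for `i`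
with respect to all opponent mixed-strategy profiles is at most `|E_i|·γ`. -/
theorem subgame_stable_csp_vulnerability_bound
    {N : Type*} [Fintype N] [DecidableEq N]
    {P : N → Type*} [∀ j, Fintype (P j)] [∀ j, DecidableEq (P j)] [∀ j, Nonempty (P j)]
    (u : N → (∀ j, P j) → ℝ)
    (Adj : N → N → Bool) (U : ∀ i j : N, P i → P j → ℝ)
    (hpoly : IsPolymatrix u Adj U) (hcs : IsConstantSumPoly Adj U)
    (γ : ℝ)
    (hstable : ∀ s : ∀ j, P j → ℝ, IsMixedProfile s → IsEpsNash u s 0 →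
        ∀ i j, Adj i j → SubgameEpsNash U i j (s i) (s j) γ)
    (i : N) (μ : (∀ j, P j) → ℝ) (hμd : IsDist μ) (hμ : IsEpsCCE u μ 0) :
    ∀ s' : ∀ j, P j → ℝ, (∀ j, j ≠ i → IsDist (s' j)) →
      mixedUtil u (fun j => marginal μ j) i
        - mixedUtil u (Function.update s' i (marginal μ i)) i
        ≤ ((neighbors Adj i).card : ℝ) * γ := by
  classical
  intro s' hs'
  have hsD : ∀ j, IsDist (marginal μ j) := fun j => marginal_isDist μ hμd j
  have hts : ∀ k, ∑ x, marginal μ k x = 1 := fun k => (hsD k).2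
  have hnash := cce_marginal_nash u Adj U hpoly hcs μ hμd hμ
  have hsub := hstable (fun j => marginal μ j) hsD hnash
  have hts' : ∀ m, ∑ x, (Function.update s' i (marginal μ i)) m x = 1 := by
    intro m
    rcases eq_or_ne m i with rfl | h
    · rw [Function.update_self]; exact hts m
    · rw [Function.update_of_ne h]; exact (hs' m h).2
  rw [poly_mixed u Adj U hpoly _ hts i, poly_mixed u Adj U hpoly _ hts' i,
    ← Finset.sum_sub_distrib]
  have hbound : ∀ j ∈ neighbors Adj i,
      subUtil U i j (marginal μ i) (marginal μ j)
        - subUtil U i j ((Function.update s' i (marginal μ i)) i)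
            ((Function.update s' i (marginal μ i)) j) ≤ γ := by
    intro j hj
    have hji : j ≠ i := neighbors_ne hpoly.1 hj
    have hadj : Adj i j := mem_neighbors_iff.1 hj
    rw [Function.update_self, Function.update_of_ne hji]
    obtain ⟨c, hc⟩ := hcs i j hadj
    exact edge_vuln U i j hc (marginal μ i) (marginal μ j) (s' j)
      (hts i) (hts j) (hs' j hji) γ (hsub i j hadj).2
  calc ∑ j ∈ neighbors Adj i,
        (subUtil U i j (marginal μ i) (marginal μ j)
          - subUtil U i j ((Function.update s' i (marginal μ i)) i)
              ((Function.update s' i (marginal μ i)) j))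
      ≤ ∑ _j ∈ neighbors Adj i, γ := Finset.sum_le_sum hbound
    _ = ((neighbors Adj i).card : ℝ) * γ := by rw [Finset.sum_const, nsmul_eq_mul]
end

section
/- For every β > 0, in the three-player Offense-Defense constant-sum polymatrix game the pure strategy profile ρ = (r, a₂, a₁) is a Nash equilibrium, it is β-subgame stable but not γ-subgame stable for any γ < β, and the vulnerability of player 0 at ρ with respect to the set of all opponent mixed-strategy profiles equals 2β (attained when players 1 and 2 both deviate to a₀). In particular, the bound |E_i|·γ of the vulnerability theorem for (0,γ)-subgame-stable constant-sum polymatrix games is tight. -/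
open Finset

/-- Edgewise utilities of the Offense-Defense game. Players: `0, 1, 2` with
`P 0 = {r, d}` (`true = d`, `false = r`), `P 1 = {a₀, a₂}` and `P 2 = {a₀, a₁}`
(`true = a₀`, `false` = attack the other non-zero player). All subgames are zero-sum. -/
def ODU (β : ℝ) : Fin 3 → Fin 3 → Bool → Bool → ℝ := fun i j pi pj =>
  if i = 0 then (if pi then 0 else if pj then -β else 0)
  else if j = 0 then -(if pj then 0 else if pi then -β else 0)
  else if i = 1 ∧ j = 2 then
    (if pi then (if pj then 0 else -β) else (if pj then β else 0))
  else if i = 2 ∧ j = 1 then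
    -(if pj then (if pi then 0 else -β) else (if pi then β else 0))
  else 0


def boolTripleEquiv : (Fin 3 → Bool) ≃ Bool × Bool × Bool where
  toFun ρ := (ρ 0, ρ 1, ρ 2)
  invFun p := ![p.1, p.2.1, p.2.2]
  left_inv ρ := by funext i; fin_cases i <;> rfl
  right_inv p := rfl

lemma sum3 (f : (Fin 3 → Bool) → ℝ) :
    ∑ ρ : Fin 3 → Bool, f ρ =
      f ![false, false, false] + f ![false, false, true] + f ![false, true, false] +
      f ![false, true, true] + f ![true, false, false] + f ![true, false, true] +
      f ![true, true, false] + f ![true, true, true] := by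
  rw [Fintype.sum_equiv boolTripleEquiv f (fun p => f ![p.1, p.2.1, p.2.2])
    (fun ρ => by congr 1; funext i; fin_cases i <;> rfl)]
  simp [Fintype.sum_prod_type, Fintype.sum_bool]
  ring

/-- In Offense-Defense (a CSP game on three players with all edges present),
for every β > 0 the pure profile `ρ = (r, a₂, a₁)` (all `false`) is a Nash equilibrium, it is
β-subgame stable but not γ-subgame stable for any γ < β, and the vulnerability of player 0
at `ρ` with respect to all opponent mixed-strategy profiles equals 2β, attained when players
1 and 2 both deviate to `a₀` (all `true`); so the `|E_i|·γ` bound is tight. -/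
theorem offense_defense_vulnerability (β : ℝ) (hβ : 0 < β) :
    let Adj : Fin 3 → Fin 3 → Bool := fun i j => decide (i ≠ j)
    let u : Fin 3 → (Fin 3 → Bool) → ℝ := fun i ρ =>
      polyUtil (P := fun _ => Bool) Adj (ODU β) i ρ
    let ρ : (j : Fin 3) → Bool → ℝ := fun _ => pureMix false
    IsEpsNash u ρ 0 ∧
    (∀ i j, Adj i j → SubgameEpsNash (P := fun _ => Bool) (ODU β) i j (ρ i) (ρ j) β) ∧
    (∀ γ : ℝ, γ < β →
      ¬ ∀ i j, Adj i j → SubgameEpsNash (P := fun _ => Bool) (ODU β) i j (ρ i) (ρ j) γ) ∧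
    (∀ s' : Fin 3 → Bool → ℝ, (∀ j, j ≠ 0 → IsDist (s' j)) →
      mixedUtil u ρ 0 - mixedUtil u (Function.update s' 0 (ρ 0)) 0 ≤ 2 * β) ∧
    mixedUtil u ρ 0
      - mixedUtil u (Function.update (fun _ => pureMix true) 0 (ρ 0)) 0 = 2 * β := by
  intro Adj u ρ
  have hu : ∀ i ρ', u i ρ' = polyUtil (P := fun _ => Bool) Adj (ODU β) i ρ' := fun _ _ => rfl
  refine ⟨?_, ?_, ?_, ?_, ?_⟩
  · intro i ρi'
    fin_cases i <;> cases ρi' <;>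
      simp [mixedUtil, sum3, hu, polyUtil, neighbors, Finset.sum_filter,
        Fin.sum_univ_three, Fin.prod_univ_three, Function.update, pureMix, ODU, Adj, ρ]
  · intro i j hij
    fin_cases i <;> fin_cases j <;> simp_all [Adj] <;>
      constructor <;> intro p <;> cases p <;>
      simp [subUtil, Fintype.sum_bool, pureMix, ODU, ρ] <;> nlinarith [hβ]
  · intro γ hγ h
    have := (h 0 1 (by simp [Adj])).2 true
    simp [subUtil, Fintype.sum_bool, pureMix, ODU, ρ] at this
    linarith
  · intro s' hs'
    have h1 := hs' 1 (by decide)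
    have h2 := hs' 2 (by decide)
    obtain ⟨h1n, h1s⟩ := h1
    obtain ⟨h2n, h2s⟩ := h2
    simp only [Fintype.sum_bool] at h1s h2s
    have h1t := h1n true; have h1f := h1n false
    have h2t := h2n true; have h2f := h2n false
    simp [mixedUtil, sum3, hu, polyUtil, neighbors, Finset.sum_filter,
      Fin.sum_univ_three, Fin.prod_univ_three, Function.update, pureMix, ODU, Adj, ρ]
    nlinarith [mul_nonneg hβ.le (by linarith : (0:ℝ) ≤ 1 - s' 1 true),
      mul_nonneg hβ.le (by linarith : (0:ℝ) ≤ 1 - s' 2 true),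
      mul_nonneg (mul_nonneg hβ.le h1t) h2t, mul_nonneg (mul_nonneg hβ.le h1t) h2f,
      mul_nonneg (mul_nonneg hβ.le h1f) h2t, h1s, h2s]
  · simp [mixedUtil, sum3, hu, polyUtil, neighbors, Finset.sum_filter,
      Fin.sum_univ_three, Fin.prod_univ_three, Function.update, pureMix, ODU, Adj, ρ]
    ring
end

section
/- For every β ≠ 0, the four payoff values of the Bad Card game subtree admit no polymatrix decomposition: there do not exist real numbers A, A', B, B', k such that A + B + k = −β, A + B' + k = −β, A' + B + k = −β, and A' + B' + k = β. Consequently, there exists a three-player normal-form game (the normal form of Bad Card restricted to player 0's utility) whose utility function u_0 : P_0 × P_1 × P_2 → ℝ cannot be written in the form u_0(ρ_0, ρ_1, ρ_2) = f(ρ_0, ρ_1) + g(ρ_0, ρ_2) + h(ρ_0) for any functions f, g, h; i.e., the game is not a polymatrix game. -/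
open Finset

/-- For every β ≠ 0, the four payoff values of the Bad Card subtree admit no
polymatrix decomposition, and consequently there is a three-player game (the normal form of
Bad Card restricted to player 0's utility, with `c = true`, `f = false`) whose utility
`u_0` cannot be written as `f(ρ_0,ρ_1) + g(ρ_0,ρ_2) + h(ρ_0)`. -/
theorem bad_card_not_polymatrix (β : ℝ) (hβ : β ≠ 0) :
    (¬ ∃ A A' B B' k : ℝ,
        A + B + k = -β ∧ A + B' + k = -β ∧ A' + B + k = -β ∧ A' + B' + k = β) ∧
    ∃ u0 : Bool → Bool → Bool → ℝ,
      (∀ p0 p1 p2, u0 p0 p1 p2 = if p1 = false ∧ p2 = false then β else -β) ∧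
      ¬ ∃ (f : Bool → Bool → ℝ) (g : Bool → Bool → ℝ) (h : Bool → ℝ),
          ∀ p0 p1 p2, u0 p0 p1 p2 = f p0 p1 + g p0 p2 + h p0 := by
  have h1 : ¬ ∃ A A' B B' k : ℝ,
      A + B + k = -β ∧ A + B' + k = -β ∧ A' + B + k = -β ∧ A' + B' + k = β := by
    rintro ⟨A, A', B, B', k, e1, e2, e3, e4⟩
    apply hβ
    linarith
  refine ⟨h1, fun p0 p1 p2 => if p1 = false ∧ p2 = false then β else -β,
    fun _ _ _ => rfl, ?_⟩
  rintro ⟨f, g, h, hf⟩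
  apply h1
  refine ⟨f true true, f true false, g true true, g true false, h true, ?_, ?_, ?_, ?_⟩
  · have := hf true true true; simp at this; linarith
  · have := hf true true false; simp at this; linarith
  · have := hf true false true; simp at this; linarith
  · have := hf true false false; simp at this; linarith
end

section
/- If μ is a coarse correlated equilibrium of an n-player constant-sum polymatrix game G, then the marginal strategy profile s^μ is a Nash equilibrium of G. -/
open Finset

set_option linter.unusedSectionVars false

section AuxCCE
variable {N : Type*} [Fintype N] [DecidableEq N]
variable {P : N → Type*} [∀ j, Fintype (P j)] [∀ j, DecidableEq (P j)]

/-- Marginalize one coordinate of a product measure. -/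
lemma cce_aux_lemA (s : ∀ j, P j → ℝ) (i : N) (hsi : ∑ a, s i a = 1) (F : (∀ j, P j) → ℝ) :
    ∑ ρ : ∀ j, P j, (∏ k, s k (ρ k)) * F ρ
      = ∑ pi : P i, s i pi * ∑ ρ : ∀ j, P j, (∏ k, s k (ρ k)) * F (Function.update ρ i pi) := by
  have key : ∀ (pi : P i) (ρ : ∀ j, P j),
      ∏ k, s k (Function.update ρ i pi k) = s i pi * ∏ k ∈ univ.erase i, s k (ρ k) := by
    intro pi ρ
    rw [← Finset.mul_prod_erase univ (fun k => s k (Function.update ρ i pi k)) (mem_univ i)]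
    simp only [Function.update_self]
    congr 1
    exact Finset.prod_congr rfl fun k hk => by
      rw [Function.update_of_ne (Finset.ne_of_mem_erase hk)]
  set G : P i × (∀ j, P j) → ℝ :=
    fun x => s i x.1 * ((∏ k, s k (x.2 k)) * F (Function.update x.2 i x.1)) with hG
  set Φ : P i × (∀ j, P j) → P i × (∀ j, P j) :=
    fun x => (x.2 i, Function.update x.2 i x.1) with hΦ
  have hinv : Function.Involutive Φ := by
    intro x
    simp [Φ, Function.update_idem, Function.update_self, Function.update_eq_self]
  have step : ∑ x : P i × (∀ j, P j), G (Φ x) = ∑ x : P i × (∀ j, P j), G x :=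
    Fintype.sum_bijective Φ hinv.bijective _ _ (fun x => rfl)
  symm
  calc ∑ pi : P i, s i pi * ∑ ρ : ∀ j, P j, (∏ k, s k (ρ k)) * F (Function.update ρ i pi)
      = ∑ x : P i × (∀ j, P j), G x := by
        rw [Fintype.sum_prod_type]
        exact Finset.sum_congr rfl fun pi _ => Finset.mul_sum _ _ _
    _ = ∑ x : P i × (∀ j, P j), G (Φ x) := step.symm
    _ = ∑ ρ : ∀ j, P j, (∏ k, s k (ρ k)) * F ρ := by
        rw [Fintype.sum_prod_type, Finset.sum_comm]
        refine Finset.sum_congr rfl fun ρ _ => ?_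
        have h1 : ∀ pi : P i, G (Φ (pi, ρ))
            = s i pi * ((s i (ρ i) * ∏ k ∈ univ.erase i, s k (ρ k)) * F ρ) := by
          intro pi
          simp only [hG, hΦ, Function.update_idem, Function.update_eq_self, key]
          ring
        rw [Finset.sum_congr rfl fun pi _ => h1 pi, ← Finset.sum_mul, hsi, one_mul,
          Finset.mul_prod_erase univ (fun k => s k (ρ k)) (mem_univ i)]

lemma cce_aux_mass (s : ∀ j, P j → ℝ) (hs : ∀ j, ∑ a, s j a = 1) :
    ∑ ρ : ∀ j, P j, ∏ k, s k (ρ k) = 1 := by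
  have := Finset.prod_univ_sum (fun j : N => (univ : Finset (P j))) (fun j a => s j a)
  rw [Fintype.piFinset_univ] at this
  rw [← this]
  simp [hs]

/-- Two-coordinate factorization of expectations under a product measure. -/
lemma cce_aux_lemB (s : ∀ j, P j → ℝ) (hs : ∀ j, ∑ a, s j a = 1) (i j : N) (hij : i ≠ j)
    (g : P i → P j → ℝ) :
    ∑ ρ : ∀ j, P j, (∏ k, s k (ρ k)) * g (ρ i) (ρ j)
      = ∑ pi : P i, ∑ pj : P j, s i pi * s j pj * g pi pj := by
  rw [cce_aux_lemA s i (hs i)]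
  refine Finset.sum_congr rfl fun pi _ => ?_
  simp only [Function.update_self, Function.update_of_ne (Ne.symm hij)]
  rw [cce_aux_lemA s j (hs j) (fun ρ => g pi (ρ j))]
  simp only [Function.update_self]
  rw [Finset.mul_sum]
  refine Finset.sum_congr rfl fun pj _ => ?_
  rw [← Finset.sum_mul, cce_aux_mass s hs]
  ring

/-- Expectation of a single-coordinate function against μ equals expectation
against the marginal. -/
lemma cce_aux_marg (μ : (∀ j, P j) → ℝ) (j : N) (g : P j → ℝ) :
    ∑ ρ : ∀ k, P k, μ ρ * g (ρ j) = ∑ pj : P j, marginal μ j pj * g pj := by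
  unfold marginal
  symm
  calc ∑ pj : P j, (∑ ρ : ∀ k, P k, if ρ j = pj then μ ρ else 0) * g pj
      = ∑ pj : P j, ∑ ρ : ∀ k, P k, (if ρ j = pj then μ ρ * g (ρ j) else 0) := by
        refine Finset.sum_congr rfl fun pj _ => ?_
        rw [Finset.sum_mul]
        refine Finset.sum_congr rfl fun ρ _ => ?_
        split
        · next h => rw [h]
        · rw [zero_mul]
    _ = ∑ ρ : ∀ k, P k, ∑ pj : P j, (if ρ j = pj then μ ρ * g (ρ j) else 0) :=
        Finset.sum_comm
    _ = ∑ ρ : ∀ k, P k, μ ρ * g (ρ j) := by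
        refine Finset.sum_congr rfl fun ρ _ => ?_
        rw [Finset.sum_ite_eq univ (ρ j) (fun _ => μ ρ * g (ρ j)), if_pos (mem_univ _)]

end AuxCCE

/-- If `μ` is a CCE of an n-player constant-sum polymatrix game `G`, then the
marginal strategy profile `s^μ` is a Nash equilibrium of `G`. -/
theorem cce_marginal_is_nash_in_csp
    {N : Type*} [Fintype N] [DecidableEq N]
    {P : N → Type*} [∀ j, Fintype (P j)] [∀ j, DecidableEq (P j)] [∀ j, Nonempty (P j)]
    (u : N → (∀ j, P j) → ℝ)
    (Adj : N → N → Bool) (U : ∀ i j : N, P i → P j → ℝ)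
    (hpoly : IsPolymatrix u Adj U) (hcs : IsConstantSumPoly Adj U)
    (μ : (∀ j, P j) → ℝ) (hμd : IsDist μ) (hμ : IsEpsCCE u μ 0) :
    IsEpsNash u (fun j => marginal μ j) 0 := by
  obtain ⟨⟨hsymm, hirr⟩, hu⟩ := hpoly
  set s : ∀ j, P j → ℝ := fun j => marginal μ j with hsdef
  have hsnn : ∀ j pj, 0 ≤ s j pj := by
    intro j pj
    exact Finset.sum_nonneg fun ρ _ => by
      split
      · exact hμd.1 ρ
      · exact le_rfl
  have hssum : ∀ j, ∑ a, s j a = 1 := by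
    intro j
    show ∑ a, marginal μ j a = 1
    unfold marginal
    rw [Finset.sum_comm]
    calc ∑ ρ : ∀ k, P k, ∑ a : P j, (if ρ j = a then μ ρ else 0)
        = ∑ ρ : ∀ k, P k, μ ρ := by
          refine Finset.sum_congr rfl fun ρ _ => ?_
          rw [Finset.sum_ite_eq univ (ρ j) (fun _ => μ ρ), if_pos (mem_univ _)]
      _ = 1 := hμd.2
  have hnbr : ∀ {i j : N}, j ∈ neighbors Adj i → Adj i j := by
    intro i j hj
    simpa [neighbors] using hj
  have hnbr' : ∀ {i j : N}, j ∈ neighbors Adj i → i ≠ j := by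
    intro i j hj he
    subst he
    have := hnbr hj
    rw [hirr i] at this
    exact Bool.false_ne_true this
  -- pureMix sums to 1
  have hpure : ∀ (j : N) (a : P j), ∑ b, pureMix a b = 1 := by
    intro j a
    unfold pureMix
    rw [Finset.sum_ite_eq' univ a (fun _ => (1:ℝ)), if_pos (mem_univ _)]
  -- The key quantities
  set e : N → N → ℝ := fun i j => ∑ ρ : ∀ k, P k, μ ρ * U i j (ρ i) (ρ j) with hedef
  set E : N → ℝ := fun i => ∑ ρ : ∀ k, P k, μ ρ * u i ρ with hEdef
  set M : N → ℝ := fun i => mixedUtil u s i with hMdef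
  set D : ∀ i : N, P i → ℝ := fun i pi => mixedUtil u (Function.update s i (pureMix pi)) i
    with hDdef
  have hE : ∀ i, E i = ∑ j ∈ neighbors Adj i, e i j := by
    intro i
    calc E i = ∑ ρ : ∀ k, P k, ∑ j ∈ neighbors Adj i, μ ρ * U i j (ρ i) (ρ j) := by
          refine Finset.sum_congr rfl fun ρ _ => ?_
          rw [hu i ρ]
          exact Finset.mul_sum _ _ _
      _ = ∑ j ∈ neighbors Adj i, e i j := Finset.sum_comm
  have hM : ∀ i, M i = ∑ j ∈ neighbors Adj i, subUtil U i j (s i) (s j) := by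
    intro i
    calc M i = ∑ j ∈ neighbors Adj i, ∑ ρ : ∀ k, P k, (∏ k, s k (ρ k)) * U i j (ρ i) (ρ j) := by
          rw [hMdef]
          show ∑ ρ : ∀ k, P k, (∏ k, s k (ρ k)) * u i ρ = _
          rw [← Finset.sum_comm]
          refine Finset.sum_congr rfl fun ρ _ => ?_
          rw [hu i ρ]
          exact Finset.mul_sum _ _ _
      _ = ∑ j ∈ neighbors Adj i, subUtil U i j (s i) (s j) := by
          refine Finset.sum_congr rfl fun j hj => ?_
          exact cce_aux_lemB s hssum i j (hnbr' hj) (U i j)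
  -- deviation utilities
  have hDval : ∀ (i : N) (pi' : P i),
      D i pi' = ∑ j ∈ neighbors Adj i, subUtil U i j (pureMix pi') (s j) := by
    intro i pi'
    set s' : ∀ j, P j → ℝ := Function.update s i (pureMix pi') with hs'
    have hs'sum : ∀ k, ∑ a, s' k a = 1 := by
      intro k
      by_cases hk : k = i
      · subst hk; rw [hs', Function.update_self]; exact hpure _ pi'
      · rw [hs', Function.update_of_ne hk]; exact hssum k
    calc D i pi' = ∑ j ∈ neighbors Adj i, ∑ ρ : ∀ k, P k, (∏ k, s' k (ρ k)) * U i j (ρ i) (ρ j) := by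
          rw [hDdef]
          show ∑ ρ : ∀ k, P k, (∏ k, s' k (ρ k)) * u i ρ = _
          rw [← Finset.sum_comm]
          refine Finset.sum_congr rfl fun ρ _ => ?_
          rw [hu i ρ]
          exact Finset.mul_sum _ _ _
      _ = ∑ j ∈ neighbors Adj i, subUtil U i j (s' i) (s' j) := by
          refine Finset.sum_congr rfl fun j hj => ?_
          exact cce_aux_lemB s' hs'sum i j (hnbr' hj) (U i j)
      _ = ∑ j ∈ neighbors Adj i, subUtil U i j (pureMix pi') (s j) := by
          refine Finset.sum_congr rfl fun j hj => ?_
          rw [hs', Function.update_self, Function.update_of_ne (Ne.symm (hnbr' hj))]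
  -- collapse of subUtil with a pure first strategy
  have hsubpure : ∀ (i j : N) (pi' : P i) (t : P j → ℝ),
      subUtil U i j (pureMix pi') t = ∑ pj : P j, t pj * U i j pi' pj := by
    intro i j pi' t
    unfold subUtil pureMix
    rw [Finset.sum_comm (s := (univ : Finset (P i))) (t := (univ : Finset (P j)))
      (f := fun pi pj => (if pi = pi' then (1:ℝ) else 0) * t pj * U i j pi pj)]
    refine Finset.sum_congr rfl fun pj _ => ?_
    calc ∑ pi : P i, (if pi = pi' then (1:ℝ) else 0) * t pj * U i j pi pj
        = ∑ pi : P i, (if pi = pi' then t pj * U i j pi pj else 0) := by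
          refine Finset.sum_congr rfl fun pi _ => ?_
          split
          · rw [one_mul]
          · rw [zero_mul, zero_mul]
      _ = t pj * U i j pi' pj := by
          rw [Finset.sum_ite_eq' univ pi' (fun pi => t pj * U i j pi pj), if_pos (mem_univ _)]
  -- CCE inequality in terms of D and E
  have hDE : ∀ (i : N) (pi' : P i), D i pi' ≤ E i := by
    intro i pi'
    have h0 := hμ i pi'
    have hexp : ∑ ρ : ∀ k, P k, μ ρ * (u i (Function.update ρ i pi') - u i ρ)
        = (∑ ρ : ∀ k, P k, μ ρ * u i (Function.update ρ i pi')) - E i := by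
      rw [hEdef, ← Finset.sum_sub_distrib]
      exact Finset.sum_congr rfl fun ρ _ => by ring
    have hdev : ∑ ρ : ∀ k, P k, μ ρ * u i (Function.update ρ i pi') = D i pi' := by
      calc ∑ ρ : ∀ k, P k, μ ρ * u i (Function.update ρ i pi')
          = ∑ j ∈ neighbors Adj i, ∑ ρ : ∀ k, P k, μ ρ * U i j pi' (ρ j) := by
            rw [← Finset.sum_comm]
            refine Finset.sum_congr rfl fun ρ _ => ?_
            rw [hu i (Function.update ρ i pi'), polyUtil, Finset.mul_sum]
            refine Finset.sum_congr rfl fun j hj => ?_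
            rw [Function.update_self, Function.update_of_ne (Ne.symm (hnbr' hj))]
        _ = ∑ j ∈ neighbors Adj i, subUtil U i j (pureMix pi') (s j) := by
            refine Finset.sum_congr rfl fun j hj => ?_
            rw [cce_aux_marg μ j (fun pj => U i j pi' pj), hsubpure]
        _ = D i pi' := (hDval i pi').symm
    rw [hexp, hdev] at h0
    linarith
  -- M i as an average of D i
  have hMD : ∀ i, M i = ∑ pi : P i, s i pi * D i pi := by
    intro i
    calc M i = ∑ j ∈ neighbors Adj i, ∑ pi : P i, s i pi * ∑ pj : P j, s j pj * U i j pi pj := by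
          rw [hM i]
          refine Finset.sum_congr rfl fun j hj => ?_
          unfold subUtil
          refine Finset.sum_congr rfl fun pi _ => ?_
          rw [Finset.mul_sum]
          exact Finset.sum_congr rfl fun pj _ => by ring
      _ = ∑ pi : P i, s i pi * ∑ j ∈ neighbors Adj i, ∑ pj : P j, s j pj * U i j pi pj := by
          rw [Finset.sum_comm]
          exact Finset.sum_congr rfl fun pi _ => (Finset.mul_sum _ _ _).symm
      _ = ∑ pi : P i, s i pi * D i pi := by
          refine Finset.sum_congr rfl fun pi _ => ?_
          congr 1
          rw [hDval i pi]
          exact Finset.sum_congr rfl fun j hj => (hsubpure i j pi (s j)).symm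
  have hME : ∀ i, M i ≤ E i := by
    intro i
    rw [hMD i]
    calc ∑ pi : P i, s i pi * D i pi ≤ ∑ pi : P i, s i pi * E i :=
          Finset.sum_le_sum fun pi _ =>
            mul_le_mul_of_nonneg_left (hDE i pi) (hsnn i pi)
      _ = E i := by rw [← Finset.sum_mul, hssum i, one_mul]
  -- total sums coincide (constant-sum argument)
  choose c hc using hcs
  have he_pair : ∀ (i j : N) (h : Adj i j), e i j + e j i = c i j h := by
    intro i j h
    rw [hedef]
    show (∑ ρ : ∀ k, P k, μ ρ * U i j (ρ i) (ρ j)) + (∑ ρ : ∀ k, P k, μ ρ * U j i (ρ j) (ρ i))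
        = c i j h
    rw [← Finset.sum_add_distrib]
    calc ∑ ρ : ∀ k, P k, (μ ρ * U i j (ρ i) (ρ j) + μ ρ * U j i (ρ j) (ρ i))
        = ∑ ρ : ∀ k, P k, μ ρ * c i j h := by
          refine Finset.sum_congr rfl fun ρ _ => ?_
          rw [← mul_add, hc i j h (ρ i) (ρ j)]
      _ = c i j h := by rw [← Finset.sum_mul, hμd.2, one_mul]
  have hm_pair : ∀ (i j : N) (h : Adj i j),
      subUtil U i j (s i) (s j) + subUtil U j i (s j) (s i) = c i j h := by
    intro i j h
    unfold subUtil
    rw [Finset.sum_comm (s := univ) (t := univ)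
      (f := fun pj pi => s j pj * s i pi * U j i pj pi)]
    rw [← Finset.sum_add_distrib]
    calc ∑ pi : P i, ((∑ pj : P j, s i pi * s j pj * U i j pi pj)
            + ∑ pj : P j, s j pj * s i pi * U j i pj pi)
        = ∑ pi : P i, s i pi * ∑ pj : P j, s j pj * c i j h := by
          refine Finset.sum_congr rfl fun pi _ => ?_
          rw [← Finset.sum_add_distrib, Finset.mul_sum]
          refine Finset.sum_congr rfl fun pj _ => ?_
          rw [← hc i j h pi pj]
          ring
      _ = c i j h := by
          have : ∀ pi : P i, s i pi * ∑ pj : P j, s j pj * c i j h = s i pi * c i j h := by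
            intro pi
            rw [← Finset.sum_mul, hssum j, one_mul]
          rw [Finset.sum_congr rfl fun pi _ => this pi, ← Finset.sum_mul, hssum i, one_mul]
  have hsum_eq : ∑ i, E i = ∑ i, M i := by
    have key : ∀ (f : N → N → ℝ),
        (∀ (i j : N) (h : Adj i j), f i j + f j i = c i j h) →
        (2:ℝ) * (∑ i, ∑ j, if Adj i j then f i j else 0)
          = ∑ i, ∑ j, (if h : Adj i j then c i j h else 0) := by
      intro f hf
      have hswap : (∑ i, ∑ j, if Adj i j then f i j else 0)
          = ∑ i, ∑ j, if Adj i j then f j i else 0 := by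
        rw [Finset.sum_comm]
        refine Finset.sum_congr rfl fun i _ => Finset.sum_congr rfl fun j _ => ?_
        rw [hsymm j i]
      rw [two_mul]
      nth_rewrite 2 [hswap]
      rw [← Finset.sum_add_distrib]
      refine Finset.sum_congr rfl fun i _ => ?_
      rw [← Finset.sum_add_distrib]
      refine Finset.sum_congr rfl fun j _ => ?_
      by_cases h : Adj i j
      · rw [if_pos h, if_pos h, dif_pos h, hf i j h]
      · rw [if_neg h, if_neg h, dif_neg h, add_zero]
    have hEs : ∑ i, E i = ∑ i, ∑ j, if Adj i j then e i j else 0 := by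
      refine Finset.sum_congr rfl fun i _ => ?_
      rw [hE i]
      rw [neighbors, Finset.sum_filter]
    have hMs : ∑ i, M i = ∑ i, ∑ j, if Adj i j then subUtil U i j (s i) (s j) else 0 := by
      refine Finset.sum_congr rfl fun i _ => ?_
      rw [hM i, neighbors, Finset.sum_filter]
    have h1 := key e he_pair
    have h2 := key (fun i j => subUtil U i j (s i) (s j)) hm_pair
    rw [hEs, hMs]
    have := h1.trans h2.symm
    linarith
  have hEM : ∀ i, E i = M i := by
    have hz : ∑ i, (E i - M i) = 0 := by
      rw [Finset.sum_sub_distrib, hsum_eq, sub_self]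
    have hnn : ∀ i ∈ univ, 0 ≤ E i - M i := fun i _ => sub_nonneg.2 (hME i)
    intro i
    have := (Finset.sum_eq_zero_iff_of_nonneg hnn).1 hz i (mem_univ i)
    linarith
  intro i pi'
  have h1 : D i pi' ≤ E i := hDE i pi'
  have h2 : E i = M i := hEM i
  show mixedUtil u (Function.update s i (pureMix pi')) i - mixedUtil u s i ≤ 0
  have : mixedUtil u (Function.update s i (pureMix pi')) i = D i pi' := rfl
  rw [this]
  have : mixedUtil u s i = M i := rfl
  rw [this]
  linarith
end
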